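/- arXiv:math-ph/0303026 — 8 statements merged into one kernel-verified Lean document; each statement's English description precedes it below -/
import Mathlib

section
/- Let m be a complex number with m ∉ {0, -1, -1/2, -1/3, ..., -1/n}, and set m' = 1/m. If complex numbers x₁,...,xₙ, y satisfy x₁^s + ... + xₙ^s + m'·y^s = 0 for all s = 1, 2, ..., n+1, then x₁ = ... = xₙ = y = 0. -/
open Polynomial Finset

/-- Vandermonde-type lemma: if `S` is a finite set of nonzero complex numbers and
`∑ z ∈ S, f z * z ^ s = 0` for `s = 1,...,|S|`, then `f` vanishes on `S`. -/
lemma vdm_aux (S : Finset ℂ) (h0 : ∀ z ∈ S, z ≠ 0) (f : ℂ → ℂ)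
    (h : ∀ s ∈ Finset.Icc 1 S.card, ∑ z ∈ S, f z * z ^ s = 0) :
    ∀ z ∈ S, f z = 0 := by
  intro z hz
  set P : Polynomial ℂ := Polynomial.X * ∏ w ∈ S.erase z, (Polynomial.X - Polynomial.C w)
    with hPdef
  have hdeg : P.natDegree = S.card := by
    rw [hPdef, Polynomial.natDegree_mul (Polynomial.X_ne_zero)
      (by exact Finset.prod_ne_zero_iff.mpr fun w _ => Polynomial.X_sub_C_ne_zero w),
      Polynomial.natDegree_X,
      Polynomial.natDegree_prod _ _ (fun w _ => Polynomial.X_sub_C_ne_zero w)]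
    simp only [Polynomial.natDegree_X_sub_C, Finset.sum_const, smul_eq_mul, mul_one]
    rw [Finset.card_erase_of_mem hz]
    have : 1 ≤ S.card := Finset.card_pos.mpr ⟨z, hz⟩
    omega
  have hcoeff0 : P.coeff 0 = 0 := by
    rw [Polynomial.coeff_zero_eq_eval_zero, hPdef]
    simp
  have key : ∑ w ∈ S, f w * P.eval w = 0 := by
    have hev : ∀ w : ℂ, P.eval w = ∑ s ∈ Finset.range (S.card + 1), P.coeff s * w ^ s := by
      intro w
      rw [Polynomial.eval_eq_sum_range, hdeg]
    calc ∑ w ∈ S, f w * P.eval w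
        = ∑ w ∈ S, ∑ s ∈ Finset.range (S.card + 1), P.coeff s * (f w * w ^ s) := by
          refine Finset.sum_congr rfl fun w _ => ?_
          rw [hev w, Finset.mul_sum]
          refine Finset.sum_congr rfl fun s _ => by ring
      _ = ∑ s ∈ Finset.range (S.card + 1), P.coeff s * ∑ w ∈ S, f w * w ^ s := by
          rw [Finset.sum_comm]
          refine Finset.sum_congr rfl fun s _ => by rw [Finset.mul_sum]
      _ = 0 := by
          refine Finset.sum_eq_zero fun s hs => ?_
          rcases Nat.eq_zero_or_pos s with h0s | h1s
          · rw [h0s, hcoeff0, zero_mul]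
          · rw [h s (Finset.mem_Icc.mpr ⟨h1s, by
              have := Finset.mem_range.mp hs; omega⟩), mul_zero]
  have hsingle : ∑ w ∈ S, f w * P.eval w = f z * P.eval z := by
    refine Finset.sum_eq_single_of_mem z hz fun w hw hne => ?_
    have : P.eval w = 0 := by
      rw [hPdef]
      simp only [Polynomial.eval_mul, Polynomial.eval_prod, Polynomial.eval_sub,
        Polynomial.eval_X, Polynomial.eval_C]
      have : (∏ v ∈ S.erase z, (w - v)) = 0 :=
        Finset.prod_eq_zero (Finset.mem_erase.mpr ⟨hne, hw⟩) (by ring)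
      rw [this, mul_zero]
    rw [this, mul_zero]
  have hPz : P.eval z ≠ 0 := by
    rw [hPdef]
    simp only [Polynomial.eval_mul, Polynomial.eval_prod, Polynomial.eval_sub,
      Polynomial.eval_X, Polynomial.eval_C]
    exact mul_ne_zero (h0 z hz) (Finset.prod_ne_zero_iff.mpr fun w hw =>
      sub_ne_zero.mpr fun hvw => (Finset.mem_erase.mp hw).1 hvw.symm)
  have : f z * P.eval z = 0 := by rw [← hsingle, key]
  exact (mul_eq_zero.mp this).resolve_right hPz

lemma coeff_contradiction (n : ℕ) (m : ℂ) (hm0 : m ≠ 0)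
    (hm : ∀ k ∈ Finset.Icc 1 n, m ≠ -1 / (k : ℂ))
    (k : ℕ) (hk : k ≤ n) (heq : (k : ℂ) + 1 / m = 0) : False := by
  rcases Nat.eq_zero_or_pos k with h0 | hpos
  · rw [h0] at heq
    simp only [Nat.cast_zero, zero_add, one_div, inv_eq_zero] at heq
    exact hm0 heq
  · have hkC : (k : ℂ) ≠ 0 := Nat.cast_ne_zero.mpr hpos.ne'
    have : m = -1 / (k : ℂ) := by
      field_simp at heq ⊢
      linear_combination heq
    exact hm k (Finset.mem_Icc.mpr ⟨hpos, hk⟩) this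

/-- If `m` avoids the exceptional set `{0, -1, -1/2, ..., -1/n}` and complex numbers
`x₁,...,xₙ, y` satisfy `x₁^s + ... + xₙ^s + (1/m)·y^s = 0` for `s = 1,...,n+1`, then all
of them vanish. -/
theorem deformed_newton_sums_only_trivial_zero (n : ℕ) (m : ℂ) (hm0 : m ≠ 0)
    (hm : ∀ k ∈ Finset.Icc 1 n, m ≠ -1 / (k : ℂ))
    (x : Fin n → ℂ) (y : ℂ)
    (h : ∀ s ∈ Finset.Icc 1 (n + 1), (∑ i, x i ^ s) + (1 / m) * y ^ s = 0) :
    (∀ i, x i = 0) ∧ y = 0 := by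
  set T : Finset ℂ := Finset.image x Finset.univ ∪ {y} with hT
  set S : Finset ℂ := T.filter (· ≠ 0) with hS
  set g : ℂ → ℂ := fun z =>
    ((Finset.univ.filter (fun i => x i = z)).card : ℂ) + (if y = z then 1 / m else 0) with hg
  have hyT : y ∈ T := Finset.mem_union_right _ (Finset.mem_singleton_self y)
  have hsum : ∀ s, 1 ≤ s → ∑ z ∈ S, g z * z ^ s = (∑ i, x i ^ s) + (1 / m) * y ^ s := by
    intro s hs
    have h1 : ∑ z ∈ S, g z * z ^ s = ∑ z ∈ T, g z * z ^ s := by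
      refine Finset.sum_filter_of_ne fun z _ hne => ?_
      intro hz0
      apply hne
      rw [hz0, zero_pow (by omega), mul_zero]
    rw [h1]
    have h2 : ∑ z ∈ T, g z * z ^ s
        = (∑ z ∈ T, ((Finset.univ.filter (fun i => x i = z)).card : ℂ) * z ^ s)
          + ∑ z ∈ T, (if y = z then (1 / m) * z ^ s else 0) := by
      rw [← Finset.sum_add_distrib]
      refine Finset.sum_congr rfl fun z _ => ?_
      rw [hg]
      by_cases hyz : y = z
      · simp only [if_pos hyz]; ring
      · simp only [if_neg hyz]; ring
    rw [h2, Finset.sum_ite_eq T y (fun z => (1 / m) * z ^ s), if_pos hyT]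
    congr 1
    have h3 : (∑ z ∈ T, ((Finset.univ.filter (fun i => x i = z)).card : ℂ) * z ^ s)
        = ∑ z ∈ Finset.image x Finset.univ,
            ((Finset.univ.filter (fun i => x i = z)).card : ℂ) * z ^ s := by
      symm
      refine Finset.sum_subset Finset.subset_union_left fun z _ hz => ?_
      have : (Finset.univ.filter (fun i => x i = z)) = ∅ := by
        refine Finset.filter_eq_empty_iff.mpr fun i _ => ?_
        intro hxi
        exact hz (Finset.mem_image.mpr ⟨i, Finset.mem_univ i, hxi⟩)
      rw [this]
      simp
    rw [h3]
    rw [show (∑ i, x i ^ s) = ∑ i : Fin n, (fun z => z ^ s) (x i) from rfl,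
      Finset.sum_comp (fun z => z ^ s) x]
    refine Finset.sum_congr rfl fun z _ => ?_
    rw [nsmul_eq_mul]
  have hS0 : ∀ z ∈ S, z ≠ 0 := fun z hz => (Finset.mem_filter.mp hz).2
  have hcard : S.card ≤ n + 1 := by
    calc S.card ≤ T.card := Finset.card_filter_le _ _
      _ ≤ (Finset.image x Finset.univ).card + ({y} : Finset ℂ).card :=
          Finset.card_union_le _ _
      _ ≤ n + 1 := by
          have := Finset.card_image_le (s := (Finset.univ : Finset (Fin n))) (f := x)
          simp only [Finset.card_univ, Fintype.card_fin, Finset.card_singleton] at this ⊢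
          omega
  have hgz : ∀ z ∈ S, g z = 0 := by
    refine vdm_aux S hS0 g fun s hs => ?_
    obtain ⟨hs1, hs2⟩ := Finset.mem_Icc.mp hs
    rw [hsum s hs1]
    exact h s (Finset.mem_Icc.mpr ⟨hs1, le_trans hs2 hcard⟩)
  have hxi : ∀ i, x i = 0 := by
    intro i
    by_contra hxi0
    have hzS : x i ∈ S := Finset.mem_filter.mpr
      ⟨Finset.mem_union_left _ (Finset.mem_image.mpr ⟨i, Finset.mem_univ i, rfl⟩), hxi0⟩
    have hgi := hgz (x i) hzS
    simp only [hg] at hgi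
    set k := (Finset.univ.filter (fun j => x j = x i)).card with hk
    have hk1 : 1 ≤ k := Finset.card_pos.mpr ⟨i, Finset.mem_filter.mpr ⟨Finset.mem_univ i, rfl⟩⟩
    have hkn : k ≤ n := by
      calc k ≤ (Finset.univ : Finset (Fin n)).card := Finset.card_filter_le _ _
        _ = n := by simp
    by_cases hyz : y = x i
    · rw [if_pos hyz] at hgi
      exact coeff_contradiction n m hm0 hm k hkn hgi
    · rw [if_neg hyz, add_zero] at hgi
      have : k = 0 := Nat.cast_injective (R := ℂ) (by simpa using hgi)
      omega
  refine ⟨hxi, ?_⟩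
  by_contra hy0
  have hyS : y ∈ S := Finset.mem_filter.mpr ⟨hyT, hy0⟩
  have hgy := hgz y hyS
  simp only [hg, if_pos rfl] at hgy
  set k := (Finset.univ.filter (fun j => x j = y)).card with hk
  have hkn : k ≤ n := by
    calc k ≤ (Finset.univ : Finset (Fin n)).card := Finset.card_filter_le _ _
      _ = n := by simp
  exact coeff_contradiction n m hm0 hm k hkn hgy
end

section
/- The deformed Newton sums p_s(x) = x₁^s + ... + xₙ^s + m^{(s-2)/2} x_{n+1}^s are quasi-invariant for the configuration A_n(m) with integer m ≥ 1: for each i = 1,...,n, p_s is invariant up to order 2m under the reflection swapping xᵢ and xⱼ, i.e., the odd normal derivatives ∂_α^{2r-1} p_s vanish on the hyperplane xᵢ = xⱼ for r = 1,...,m where α = eᵢ - eⱼ, and the first normal derivative of p_s vanishes on each hyperplane xᵢ = √m x_{n+1} (where α = eᵢ - √m e_{n+1}). -/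
/-!
Along a constant direction `α`, the `d`-th derivative of a weighted power sum `∑ w_k x_k^s` is
`s(s-1)⋯(s-d+1) ∑ w_k α_k^d x_k^{s-d}`. For `α = eᵢ - eⱼ` only the two terms `x_i^{s-d}` and
`(-1)^d x_j^{s-d}` survive, and they cancel on `xᵢ = xⱼ` when `d` is odd. For
`α = eᵢ - √m e_{n+1}` and `d = 1` the surviving terms are `x_i^{s-1}` and
`(√m^s / m)(-√m) x_{n+1}^{s-1}`, which cancel on `xᵢ = √m x_{n+1}` because
`√m^s / m · √m = √m^{s-1}`.
-/

open MvPolynomial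

/-- Directional derivative `α·∇` on polynomials in `N` variables. -/
noncomputable def dirDeriv {N : ℕ} (α : Fin N → ℝ) :
    Module.End ℝ (MvPolynomial (Fin N) ℝ) :=
  ∑ i, α i • (MvPolynomial.pderiv i).toLinearMap

/-- The deformed Newton sum `p_s = x₁^s + ... + xₙ^s + m^{(s-2)/2} x_{n+1}^s`. -/
noncomputable def deformedNewtonSum (n : ℕ) (m : ℕ) (s : ℕ) : MvPolynomial (Fin (n + 1)) ℝ :=
  (∑ i : Fin n, X i.castSucc ^ s) + C (Real.sqrt m ^ s / m) * X (Fin.last n) ^ s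

section DirDeriv

variable {N : ℕ} (α : Fin N → ℝ)

lemma dirDeriv_X_pow (k : Fin N) (t : ℕ) :
    dirDeriv α (X k ^ t) = C (α k * t) * X k ^ (t - 1) := by
  rw [dirDeriv, LinearMap.sum_apply, Finset.sum_eq_single k]
  · simp [smul_eq_C_mul, mul_assoc]
  · intro b _ hb
    simp [pderiv_X_of_ne (Ne.symm hb)]
  · simp

lemma dirDeriv_pow_X_pow (k : Fin N) (d t : ℕ) :
    (dirDeriv α ^ d) (X k ^ t) = C (α k ^ d * t.descFactorial d) * X k ^ (t - d) := by
  induction d with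
  | zero => simp
  | succ d ih =>
    rw [pow_succ', Module.End.mul_apply, ih, ← smul_eq_C_mul, map_smul, dirDeriv_X_pow,
      smul_eq_C_mul, ← mul_assoc, ← C_mul, Nat.sub_sub, Nat.descFactorial_succ]
    push_cast
    ring_nf

lemma eval_dirDeriv_pow_weightedPowerSum (w : Fin N → ℝ) (s d : ℕ) (x : Fin N → ℝ) :
    eval x ((dirDeriv α ^ d) (∑ k, C (w k) * X k ^ s)) =
      s.descFactorial d * ∑ k, w k * α k ^ d * x k ^ (s - d) := by
  rw [map_sum, map_sum, Finset.mul_sum]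
  refine Finset.sum_congr rfl fun k _ => ?_
  rw [← smul_eq_C_mul, map_smul, dirDeriv_pow_X_pow, smul_eval]
  simp only [eval_mul, eval_C, eval_pow, eval_X]
  ring

lemma eval_dirDeriv_pow_weightedPowerSum_of_pair {a b : Fin N} (hab : a ≠ b)
    (hα : ∀ k, k ≠ a → k ≠ b → α k = 0) (w : Fin N → ℝ) (s : ℕ) {d : ℕ} (hd : d ≠ 0)
    (x : Fin N → ℝ) :
    eval x ((dirDeriv α ^ d) (∑ k, C (w k) * X k ^ s)) =
      s.descFactorial d * (w a * α a ^ d * x a ^ (s - d) + w b * α b ^ d * x b ^ (s - d)) := by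
  rw [eval_dirDeriv_pow_weightedPowerSum, Fintype.sum_eq_add a b hab]
  rintro k ⟨hka, hkb⟩
  simp [hα k hka hkb, hd]

end DirDeriv

noncomputable def deformedNewtonWeight (n m s : ℕ) (k : Fin (n + 1)) : ℝ :=
  if k = Fin.last n then Real.sqrt m ^ s / m else 1

lemma deformedNewtonSum_eq_weightedPowerSum (n m s : ℕ) :
    deformedNewtonSum n m s = ∑ k, C (deformedNewtonWeight n m s k) * X k ^ s := by
  simp [deformedNewtonSum, deformedNewtonWeight, Fin.sum_univ_castSucc, Fin.castSucc_ne_last]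

lemma sqrt_pow_div_mul_sqrt {m : ℕ} (hm : m ≠ 0) {s : ℕ} (hs : 1 ≤ s) :
    Real.sqrt m ^ s / m * Real.sqrt m = Real.sqrt m ^ (s - 1) := by
  obtain ⟨t, rfl⟩ := Nat.exists_eq_add_of_le' hs
  have hm' : (m : ℝ) ≠ 0 := by exact_mod_cast hm
  rw [Nat.add_sub_cancel, div_mul_eq_mul_div, div_eq_iff hm', pow_succ, mul_assoc,
    Real.mul_self_sqrt m.cast_nonneg]

/-- The deformed Newton sums are quasi-invariant for the configuration `A_n(m)` with integer
`m ≥ 1`: for `α = eᵢ - eⱼ` the odd derivatives `∂_α^{2r-1} p_s`, `r = 1,...,m`, vanish on the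
hyperplane `xᵢ = xⱼ`, and for `α = eᵢ - √m·e_{n+1}` the first derivative `∂_α p_s` vanishes on
the hyperplane `xᵢ = √m·x_{n+1}`. -/
theorem deformedNewtonSum_quasiInvariant (n m : ℕ) (hm : 1 ≤ m) (s : ℕ) (hs : 1 ≤ s) :
    (∀ i j : Fin n, i ≠ j → ∀ r ∈ Finset.Icc 1 m, ∀ x : Fin (n + 1) → ℝ,
      x i.castSucc = x j.castSucc →
      MvPolynomial.eval x
        ((dirDeriv (fun k => if k = i.castSucc then 1 else if k = j.castSucc then -1 else 0)
            ^ (2 * r - 1)) (deformedNewtonSum n m s)) = 0) ∧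
    (∀ i : Fin n, ∀ x : Fin (n + 1) → ℝ,
      x i.castSucc = Real.sqrt m * x (Fin.last n) →
      MvPolynomial.eval x
        ((dirDeriv (fun k => if k = i.castSucc then 1
            else if k = Fin.last n then -(Real.sqrt m) else 0))
          (deformedNewtonSum n m s)) = 0) := by
  constructor
  · intro i j hij r hr x hx
    have hodd : Odd (2 * r - 1) := ⟨r - 1, by grind⟩
    have hij' : i.castSucc ≠ j.castSucc := Fin.castSucc_injective n |>.ne hij
    rw [deformedNewtonSum_eq_weightedPowerSum,
      eval_dirDeriv_pow_weightedPowerSum_of_pair _ hij' (by grind) _ _ hodd.pos.ne']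
    simp [deformedNewtonWeight, Fin.castSucc_ne_last, hij'.symm, hodd.neg_one_pow, hx]
  · intro i x hx
    rw [← pow_one (dirDeriv _), deformedNewtonSum_eq_weightedPowerSum,
      eval_dirDeriv_pow_weightedPowerSum_of_pair _ (Fin.castSucc_ne_last i) (by grind) _ _
        one_ne_zero]
    simp only [deformedNewtonWeight, Fin.castSucc_ne_last, (Fin.castSucc_ne_last i).symm,
      if_true, if_false, pow_one, hx]
    linear_combination (-(s.descFactorial 1 : ℝ) * x (Fin.last n) ^ (s - 1)) *
      sqrt_pow_div_mul_sqrt (m := m) (by omega) hs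
end

section
/- For the configuration A_n(m), the identity ∑_{α ≠ β, α,β ∈ A} m_α m_β (α,β)/((α,x)(β,x)) ≡ 0 holds as a rational function identity, where A consists of eᵢ - eⱼ (i < j ≤ n) with multiplicity m and eᵢ - √m e_{n+1} (i ≤ n) with multiplicity 1. -/
/-- The dot product on `Fin N → ℝ`. -/
def dot {N : ℕ} (a b : Fin N → ℝ) : ℝ := ∑ i, a i * b i

/-- Index set for the configuration `A_n(m)`: pairs `i < j` (vectors `eᵢ - eⱼ`) and
indices `i` (vectors `eᵢ - √m·e_{n+1}`). -/
abbrev AnmIdx (n : ℕ) := {p : Fin n × Fin n // p.1 < p.2} ⊕ Fin n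

/-- The vectors of the configuration `A_n(m)`. -/
noncomputable def AnmVec (n : ℕ) (m : ℝ) : AnmIdx n → (Fin (n + 1) → ℝ)
  | .inl p => fun k => if k = p.1.1.castSucc then 1 else if k = p.1.2.castSucc then -1 else 0
  | .inr i => fun k => if k = i.castSucc then 1 else if k = Fin.last n then -(Real.sqrt m) else 0

/-- The multiplicities of the configuration `A_n(m)`. -/
def AnmMult (n : ℕ) (m : ℝ) : AnmIdx n → ℝ
  | .inl _ => m
  | .inr _ => 1
/-!
With `F = ∑ m_α α / (α, x)` (the gradient of `log ∏ (α, x) ^ m_α`), the sum over `α ≠ β` is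
`|F|² - ∑ m_α² |α|² / (α, x)²`. Put `X_i = x_i` and `t = √m x_{n+1}`, so that
`(eᵢ - eⱼ, x) = X_i - X_j` and `(eᵢ - √m e_{n+1}, x) = X_i - t`. Then
`F_i = m ∑_{j ≠ i} 1/(X_i - X_j) + 1/(X_i - t)` and `F_{n+1} = -√m ∑_i 1/(X_i - t)`, and the
identity reduces to two classical facts about the Cauchy kernel:
`∑_{i,j,k distinct} 1/((X_i - X_j)(X_i - X_k)) = 0`, whose cyclic symmetrisation vanishes term by
term, and `(∑ u_i)² = ∑ u_i² - 2 ∑_{i ≠ j} u_i/(X_i - X_j)` for `u_i = 1/(X_i - t)`, which follows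
from `u_i - u_j = (X_j - X_i) u_i u_j`.
-/

open Finset Function Matrix

theorem dot_eq_dotProduct {N : ℕ} (a b : Fin N → ℝ) : dot a b = a ⬝ᵥ b := rfl

/-- The gradient of `x ↦ ∑ₐ c a * log |(v a, x)|`. -/
noncomputable def logGrad {ι : Type*} [Fintype ι] {N : ℕ} (c : ι → ℝ) (v : ι → Fin N → ℝ)
    (x : Fin N → ℝ) : Fin N → ℝ :=
  ∑ a, (c a / dot (v a) x) • v a

theorem dot_sum_smul_self {ι : Type*} [Fintype ι] {N : ℕ} (r : ι → ℝ) (v : ι → Fin N → ℝ) :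
    dot (∑ a, r a • v a) (∑ a, r a • v a) = ∑ a, ∑ b, r a * r b * dot (v a) (v b) := by
  simp only [dot_eq_dotProduct, sum_dotProduct]
  refine sum_congr rfl fun a _ => ?_
  simp only [dotProduct_sum, smul_dotProduct, dotProduct_smul, smul_eq_mul]
  exact sum_congr rfl fun b _ => by ring

theorem sum_ite_ne_eq_dot_logGrad_sub {ι : Type*} [Fintype ι] [DecidableEq ι] {N : ℕ}
    (c : ι → ℝ) (v : ι → Fin N → ℝ) (x : Fin N → ℝ) :
    ∑ a, ∑ b, (if a ≠ b then c a * c b * dot (v a) (v b) / (dot (v a) x * dot (v b) x) else 0) =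
      dot (logGrad c v x) (logGrad c v x) - ∑ a, c a ^ 2 * dot (v a) (v a) / dot (v a) x ^ 2 := by
  set g : ι → ι → ℝ := fun a b => c a / dot (v a) x * (c b / dot (v b) x) * dot (v a) (v b)
  have hsplit : ∀ a b, (if a ≠ b then c a * c b * dot (v a) (v b) / (dot (v a) x * dot (v b) x)
      else 0) = g a b - if a = b then g a b else 0 := by
    intro a b
    by_cases h : a = b
    · simp [h]
    · simp only [g, ne_eq, h, not_false_eq_true, if_true, if_false]
      ring
  simp only [hsplit, sum_sub_distrib, sum_ite_eq, mem_univ, if_true, logGrad, dot_sum_smul_self]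
  congr 1
  exact sum_congr rfl fun a _ => by ring

theorem sum_subtype_lt_add_swap {α M : Type*} [Fintype α] [LinearOrder α] [AddCommMonoid M]
    (g : α → α → M) (hg : ∀ i, g i i = 0) :
    ∑ p : {p : α × α // p.1 < p.2}, (g p.1.1 p.1.2 + g p.1.2 p.1.1) = ∑ i, ∑ j, g i j := by
  have hsplit : ∀ i j, g i j = (if i < j then g i j else 0) + if j < i then g i j else 0 := by
    intro i j
    rcases lt_trichotomy i j with h | rfl | h
    · simp [h, h.not_gt]
    · simp [hg]
    · simp [h, h.not_gt]
  rw [← Finset.subtype_univ, Finset.sum_subtype_eq_sum_filter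
      (fun p : α × α => g p.1 p.2 + g p.2 p.1) (p := fun p : α × α => p.1 < p.2),
    Finset.sum_filter, Fintype.sum_prod_type]
  conv_rhs => rw [sum_congr rfl fun i _ => sum_congr rfl fun j _ => hsplit i j]
  simp only [sum_add_distrib, ite_add_zero]
  rw [Finset.sum_comm (f := fun i j => if j < i then g i j else 0)]

theorem sum_sum_sum_eq_zero_of_cyclic {ι K : Type*} [Fintype ι] [Field K] [CharZero K]
    (f : ι → ι → ι → K) (hf : ∀ i j k, f i j k + f j k i + f k i j = 0) :
    ∑ i, ∑ j, ∑ k, f i j k = 0 := by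
  have h₁ : ∑ i, ∑ j, ∑ k, f j k i = ∑ i, ∑ j, ∑ k, f i j k :=
    Finset.sum_comm.trans (sum_congr rfl fun _ _ => Finset.sum_comm)
  have h₂ : ∑ i, ∑ j, ∑ k, f k i j = ∑ i, ∑ j, ∑ k, f i j k :=
    (sum_congr rfl fun _ _ => Finset.sum_comm).trans Finset.sum_comm
  have hsum : ∑ i, ∑ j, ∑ k, (f i j k + f j k i + f k i j) = 0 :=
    sum_eq_zero fun i _ => sum_eq_zero fun j _ => sum_eq_zero fun k _ => hf i j k
  simp only [sum_add_distrib] at hsum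
  rw [h₁, h₂] at hsum
  have : (3 : K) * ∑ i, ∑ j, ∑ k, f i j k = 0 := by linear_combination hsum
  simpa using this

section CauchyKernel

variable {ι K : Type*} [Fintype ι] [DecidableEq ι] [Field K]

-- In `∑ j, (X k - X j)⁻¹` the term `j = k` is `0⁻¹ = 0`, so this is the sum over `j ≠ k`.
theorem sum_sq_sum_inv_sub [CharZero K] {X : ι → K} (hX : Injective X) :
    ∑ k, (∑ j, (X k - X j)⁻¹) ^ 2 = ∑ k, ∑ j, ((X k - X j) ^ 2)⁻¹ := by
  have hne : ∀ {a b}, a ≠ b → X a - X b ≠ 0 := fun h => sub_ne_zero.2 (hX.ne h)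
  have hcyclic : ∑ k, ∑ j, ∑ l, (if l = j then 0 else (X k - X j)⁻¹ * (X k - X l)⁻¹) = 0 := by
    refine sum_sum_sum_eq_zero_of_cyclic _ fun k j l => ?_
    by_cases hkj : k = j
    · subst hkj; simp
    by_cases hjl : j = l
    · subst hjl; simp
    by_cases hlk : l = k
    · subst hlk; simp
    have := hne hkj; have := hne hjl; have := hne hlk
    have := hne (Ne.symm hkj); have := hne (Ne.symm hjl); have := hne (Ne.symm hlk)
    simp only [Ne.symm hkj, Ne.symm hjl, Ne.symm hlk, if_false]
    field_simp
    ring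
  calc ∑ k, (∑ j, (X k - X j)⁻¹) ^ 2
      = ∑ k, ∑ j, ∑ l, ((if l = j then ((X k - X j) ^ 2)⁻¹ else 0) +
          if l = j then 0 else (X k - X j)⁻¹ * (X k - X l)⁻¹) := by
        refine sum_congr rfl fun k _ => ?_
        rw [sq, sum_mul_sum]
        refine sum_congr rfl fun j _ => sum_congr rfl fun l _ => ?_
        split_ifs with h
        · rw [h, ← inv_pow, sq, add_zero]
        · rw [zero_add]
    _ = ∑ k, ∑ j, ((X k - X j) ^ 2)⁻¹ := by
        simp only [sum_add_distrib, hcyclic, add_zero, sum_ite_eq', mem_univ, if_true]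

theorem sq_sum_inv_sub_const {X : ι → K} (hX : Injective X) {t : K} (ht : ∀ k, X k ≠ t) :
    (∑ k, (X k - t)⁻¹) ^ 2 =
      ∑ k, ((X k - t)⁻¹) ^ 2 - 2 * ∑ k, (∑ j, (X k - X j)⁻¹) * (X k - t)⁻¹ := by
  have hpair : ∀ k j, (X k - t)⁻¹ * (X j - t)⁻¹ =
      (if k = j then ((X k - t)⁻¹) ^ 2 else 0) -
        ((X k - X j)⁻¹ * (X k - t)⁻¹ + (X j - X k)⁻¹ * (X j - t)⁻¹) := by
    intro k j
    by_cases hkj : k = j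
    · subst hkj; simp [sq]
    have := sub_ne_zero.2 (hX.ne hkj)
    have := sub_ne_zero.2 (hX.ne (Ne.symm hkj))
    have := sub_ne_zero.2 (ht k)
    have := sub_ne_zero.2 (ht j)
    rw [if_neg hkj]
    field_simp
    ring
  rw [sq, sum_mul_sum]
  simp only [hpair, sum_sub_distrib, sum_add_distrib, sum_ite_eq, mem_univ, if_true, sum_mul]
  rw [Finset.sum_comm (f := fun k j => (X j - X k)⁻¹ * (X j - t)⁻¹)]
  ring

theorem sum_sq_add_mul_sq_sum [CharZero K] {X : ι → K} (hX : Injective X) {t : K}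
    (ht : ∀ k, X k ≠ t) (m : K) :
    ∑ k, (m * ∑ j, (X k - X j)⁻¹ + (X k - t)⁻¹) ^ 2 + m * (∑ k, (X k - t)⁻¹) ^ 2 =
      m ^ 2 * ∑ k, ∑ j, ((X k - X j) ^ 2)⁻¹ + (1 + m) * ∑ k, ((X k - t)⁻¹) ^ 2 := by
  simp only [add_sq, mul_pow, sum_add_distrib, ← mul_sum]
  rw [sum_sq_sum_inv_sub hX, sq_sum_inv_sub_const hX ht]
  simp only [mul_assoc, ← mul_sum]
  ring

end CauchyKernel

section Anm

variable {n : ℕ} (m : ℝ)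

theorem AnmVec_inl (p : {p : Fin n × Fin n // p.1 < p.2}) :
    AnmVec n m (.inl p) = Pi.single p.1.1.castSucc 1 - Pi.single p.1.2.castSucc 1 := by
  have := (Fin.castSucc_injective n).ne p.2.ne
  funext k
  simp only [AnmVec, Pi.sub_apply, Pi.single_apply]
  split_ifs <;> simp_all

theorem AnmVec_inr (i : Fin n) :
    AnmVec n m (.inr i) = Pi.single i.castSucc 1 - Pi.single (Fin.last n) √m := by
  have := (Fin.castSucc_lt_last i).ne
  funext k
  simp only [AnmVec, Pi.sub_apply, Pi.single_apply]
  split_ifs with h₁ h₂ h₂ <;> first | exact absurd (h₁.symm.trans h₂) this | ring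

theorem dot_AnmVec_inl (p : {p : Fin n × Fin n // p.1 < p.2}) (w : Fin (n + 1) → ℝ) :
    dot (AnmVec n m (.inl p)) w = w p.1.1.castSucc - w p.1.2.castSucc := by
  simp [dot_eq_dotProduct, AnmVec_inl, sub_dotProduct, single_dotProduct]

theorem dot_AnmVec_inr (i : Fin n) (w : Fin (n + 1) → ℝ) :
    dot (AnmVec n m (.inr i)) w = w i.castSucc - √m * w (Fin.last n) := by
  simp [dot_eq_dotProduct, AnmVec_inr, sub_dotProduct, single_dotProduct]

theorem dot_AnmVec_inl_self (p : {p : Fin n × Fin n // p.1 < p.2}) :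
    dot (AnmVec n m (.inl p)) (AnmVec n m (.inl p)) = 2 := by
  have := (Fin.castSucc_injective n).ne p.2.ne
  rw [dot_AnmVec_inl, AnmVec_inl]
  simp [this, Ne.symm this]
  norm_num

theorem dot_AnmVec_inr_self {m : ℝ} (hm : 0 ≤ m) (i : Fin n) :
    dot (AnmVec n m (.inr i)) (AnmVec n m (.inr i)) = 1 + m := by
  have := (Fin.castSucc_lt_last i).ne
  rw [dot_AnmVec_inr, AnmVec_inr]
  simp [this, Ne.symm this, hm]

theorem logGrad_Anm_castSucc (x : Fin (n + 1) → ℝ) (k : Fin n) :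
    logGrad (AnmMult n m) (AnmVec n m) x k.castSucc =
      m * ∑ j : Fin n, (x k.castSucc - x j.castSucc)⁻¹ +
        (x k.castSucc - √m * x (Fin.last n))⁻¹ := by
  simp only [logGrad, Finset.sum_apply, Pi.smul_apply, Fintype.sum_sum_type, dot_AnmVec_inl,
    dot_AnmVec_inr, AnmMult, smul_eq_mul]
  simp only [AnmVec_inl, AnmVec_inr, Pi.sub_apply, Pi.single_apply, Fin.castSucc_inj,
    (Fin.castSucc_lt_last k).ne, if_false, sub_zero, mul_ite, mul_one, mul_zero, sum_ite_eq,
    mem_univ, if_true, one_div]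
  congr 1
  let g : Fin n → Fin n → ℝ := fun i j => if k = i then m * (x i.castSucc - x j.castSucc)⁻¹ else 0
  have hpair : ∀ i j : Fin n, m / (x i.castSucc - x j.castSucc) *
      ((if k = i then 1 else 0) - if k = j then 1 else 0) = g i j + g j i := by
    intro i j
    simp only [g]
    split_ifs with hi hj hj
    · simp [← hi, ← hj]
    · ring
    · rw [← neg_sub, div_neg]; ring
    · ring
  rw [sum_congr rfl fun p _ => hpair p.1.1 p.1.2, sum_subtype_lt_add_swap g (by simp [g])]
  simp [g, mul_sum]

theorem logGrad_Anm_last (x : Fin (n + 1) → ℝ) :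
    logGrad (AnmMult n m) (AnmVec n m) x (Fin.last n) =
      -(√m * ∑ i : Fin n, (x i.castSucc - √m * x (Fin.last n))⁻¹) := by
  simp only [logGrad, Finset.sum_apply, Pi.smul_apply, Fintype.sum_sum_type, dot_AnmVec_inl,
    dot_AnmVec_inr, AnmMult, smul_eq_mul]
  simp [AnmVec_inl, AnmVec_inr, (Fin.castSucc_lt_last _).ne', mul_sum]
  exact sum_congr rfl fun _ _ => mul_comm _ _

theorem sum_AnmMult_sq_mul_dot_self_div {m : ℝ} (hm : 0 ≤ m) (x : Fin (n + 1) → ℝ) :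
    ∑ a, AnmMult n m a ^ 2 * dot (AnmVec n m a) (AnmVec n m a) / dot (AnmVec n m a) x ^ 2 =
      m ^ 2 * ∑ k : Fin n, ∑ j : Fin n, ((x k.castSucc - x j.castSucc) ^ 2)⁻¹ +
        (1 + m) * ∑ k : Fin n, (x k.castSucc - √m * x (Fin.last n))⁻¹ ^ 2 := by
  simp only [Fintype.sum_sum_type, dot_AnmVec_inl_self, dot_AnmVec_inr_self hm, AnmMult]
  simp only [dot_AnmVec_inl, dot_AnmVec_inr]
  let g : Fin n → Fin n → ℝ := fun i j => m ^ 2 * ((x i.castSucc - x j.castSucc) ^ 2)⁻¹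
  have hpair : ∀ i j : Fin n, m ^ 2 * 2 / (x i.castSucc - x j.castSucc) ^ 2 = g i j + g j i := by
    intro i j
    simp only [g]
    rw [← neg_sub (x j.castSucc), neg_sq]
    ring
  rw [sum_congr rfl fun p _ => hpair p.1.1 p.1.2, sum_subtype_lt_add_swap g (by simp [g])]
  simp only [g, ← mul_sum, one_pow, one_mul, div_eq_mul_inv, inv_pow]

end Anm

/-- The identity `∑_{α ≠ β} m_α m_β (α,β)/((α,x)(β,x)) = 0` for the configuration `A_n(m)`. -/
theorem Anm_sum_identity (n : ℕ) (m : ℝ) (hm : 0 < m) (x : Fin (n + 1) → ℝ)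
    (hx : ∀ a : AnmIdx n, dot (AnmVec n m a) x ≠ 0) :
    ∑ a : AnmIdx n, ∑ b : AnmIdx n,
      (if a ≠ b then
        AnmMult n m a * AnmMult n m b * dot (AnmVec n m a) (AnmVec n m b) /
          (dot (AnmVec n m a) x * dot (AnmVec n m b) x)
      else 0) = 0 := by
  have hX : Injective fun i : Fin n => x i.castSucc := by
    intro i j hij
    by_contra hne
    rcases lt_or_gt_of_ne hne with h | h
    · exact hx (.inl ⟨(i, j), h⟩) (by rw [dot_AnmVec_inl]; exact sub_eq_zero.2 hij)
    · exact hx (.inl ⟨(j, i), h⟩) (by rw [dot_AnmVec_inl]; exact sub_eq_zero.2 hij.symm)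
  have ht : ∀ k : Fin n, x k.castSucc ≠ √m * x (Fin.last n) := fun k h =>
    hx (.inr k) (by rw [dot_AnmVec_inr]; exact sub_eq_zero.2 h)
  rw [sum_ite_ne_eq_dot_logGrad_sub, sub_eq_zero, dot, Fin.sum_univ_castSucc]
  simp only [logGrad_Anm_castSucc, logGrad_Anm_last, sum_AnmMult_sq_mul_dot_self_div hm.le, ← sq,
    neg_sq, mul_pow, Real.sq_sqrt hm.le]
  exact sum_sq_add_mul_sq_sum hX ht m
end

section
/- For the configuration A_n(m) and each vector α ∈ A, the relation ∑_{β ≠ α, β ∈ A} m_β (α,β)/(β,x) = 0 holds for all x on the hyperplane (α,x) = 0 (away from the other hyperplanes). -/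
lemma dot_comm' {N : ℕ} (a b : Fin N → ℝ) : dot a b = dot b a :=
  Finset.sum_congr rfl fun i _ => mul_comm _ _

lemma dot_two {N : ℕ} (c1 c2 : Fin N) (h : c1 ≠ c2) (x1 x2 : ℝ) (v : Fin N → ℝ) :
    dot (fun k => if k = c1 then x1 else if k = c2 then x2 else 0) v
      = x1 * v c1 + x2 * v c2 := by
  classical
  unfold dot
  have hk : ∀ k, (if k = c1 then x1 else if k = c2 then x2 else 0) * v k
      = (if k = c1 then x1 * v k else 0) + (if k = c2 then x2 * v k else 0) := by
    intro k
    by_cases h1 : k = c1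
    · subst h1; simp [h]
    · by_cases h2 : k = c2 <;> simp [h1, h2, h.symm]
  simp_rw [hk]
  rw [Finset.sum_add_distrib, Finset.sum_ite_eq' Finset.univ c1, Finset.sum_ite_eq' Finset.univ c2]
  simp

lemma dot_inl {n : ℕ} (m : ℝ) (p : {p : Fin n × Fin n // p.1 < p.2}) (v : Fin (n+1) → ℝ) :
    dot (AnmVec n m (Sum.inl p)) v = v p.1.1.castSucc - v p.1.2.castSucc := by
  have h : p.1.1.castSucc ≠ p.1.2.castSucc := by
    simpa [Fin.castSucc_inj] using p.2.ne
  have := dot_two p.1.1.castSucc p.1.2.castSucc h 1 (-1) v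
  unfold AnmVec
  rw [this]; ring

lemma dot_inr {n : ℕ} (m : ℝ) (i : Fin n) (v : Fin (n+1) → ℝ) :
    dot (AnmVec n m (Sum.inr i)) v = v i.castSucc - Real.sqrt m * v (Fin.last n) := by
  have h : i.castSucc ≠ Fin.last n := (Fin.castSucc_lt_last i).ne
  have := dot_two i.castSucc (Fin.last n) h 1 (-(Real.sqrt m)) v
  unfold AnmVec
  rw [this]; ring

/-- Build the ordered pair out of two distinct indices. -/
def mkP {n : ℕ} (u v : Fin n) (h : u ≠ v) : {p : Fin n × Fin n // p.1 < p.2} :=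
  if huv : u < v then ⟨(u, v), huv⟩ else ⟨(v, u), (h.lt_or_gt.resolve_left huv)⟩

lemma mkP_of_lt {n : ℕ} {u v : Fin n} (hI : u ≠ v) (h : u < v) : mkP u v hI = ⟨(u, v), h⟩ :=
  dif_pos h

lemma mkP_of_gt {n : ℕ} {u v : Fin n} (hI : u ≠ v) (h : v < u) : mkP u v hI = ⟨(v, u), h⟩ := by
  unfold mkP; rw [dif_neg (asymm h)]

/-- The involution used in the case `α = eᵢ - eⱼ`. -/
def swapIdx {n : ℕ} (i j : Fin n) : AnmIdx n → AnmIdx n :=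
  Sum.elim
    (fun p => Sum.inl (mkP ((Equiv.swap i j) p.1.1) ((Equiv.swap i j) p.1.2)
      ((Equiv.swap i j).injective.ne p.2.ne)))
    (fun k => Sum.inr ((Equiv.swap i j) k))

lemma swapIdx_inl {n : ℕ} (i j k l : Fin n) (h : k < l) :
    swapIdx i j (Sum.inl ⟨(k, l), h⟩)
      = Sum.inl (mkP ((Equiv.swap i j) k) ((Equiv.swap i j) l)
          ((Equiv.swap i j).injective.ne h.ne)) := rfl

lemma swapIdx_inr {n : ℕ} (i j k : Fin n) :
    swapIdx i j (Sum.inr k) = Sum.inr ((Equiv.swap i j) k) := rfl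

/-- The involution used in the case `α = eᵢ - √m e_{n+1}`. -/
def qIdx {n : ℕ} (q : Fin n) : AnmIdx n → AnmIdx n :=
  Sum.elim
    (fun p => if p.1.1 = q then Sum.inr p.1.2 else if p.1.2 = q then Sum.inr p.1.1
      else Sum.inl p)
    (fun k => if h : k = q then Sum.inr q else Sum.inl (mkP q k (Ne.symm h)))

lemma qIdx_inl_left {n : ℕ} (q l : Fin n) (h : q < l) :
    qIdx q (Sum.inl ⟨(q, l), h⟩) = Sum.inr l := by
  simp [qIdx]

lemma qIdx_inl_right {n : ℕ} (q k : Fin n) (h : k < q) :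
    qIdx q (Sum.inl ⟨(k, q), h⟩) = Sum.inr k := by
  simp [qIdx, h.ne]

lemma qIdx_inl_other {n : ℕ} (q k l : Fin n) (h : k < l) (hk : k ≠ q) (hl : l ≠ q) :
    qIdx q (Sum.inl ⟨(k, l), h⟩) = Sum.inl ⟨(k, l), h⟩ := by
  simp [qIdx, hk, hl]

lemma qIdx_inr_self {n : ℕ} (q : Fin n) : qIdx q (Sum.inr q) = Sum.inr q := by
  simp [qIdx]

lemma qIdx_inr {n : ℕ} (q k : Fin n) (h : k ≠ q) :
    qIdx q (Sum.inr k) = Sum.inl (mkP q k (Ne.symm h)) := by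
  simp [qIdx, h]

/-- For each `α` in `A_n(m)`, the relation `∑_{β ≠ α} m_β (α,β)/(β,x) = 0` holds on the
hyperplane `(α,x) = 0` away from the other hyperplanes. -/
theorem Anm_hyperplane_identity (n : ℕ) (m : ℝ) (hm : 0 < m) (a : AnmIdx n)
    (x : Fin (n + 1) → ℝ) (hax : dot (AnmVec n m a) x = 0)
    (hx : ∀ b : AnmIdx n, b ≠ a → dot (AnmVec n m b) x ≠ 0) :
    ∑ b : AnmIdx n,
      (if b ≠ a then AnmMult n m b * dot (AnmVec n m a) (AnmVec n m b) / dot (AnmVec n m b) x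
      else 0) = 0 := by
  classical
  rw [← Finset.sum_filter]
  have hFl : ∀ (k l : Fin n) (hkl : k < l),
      AnmMult n m (Sum.inl ⟨(k, l), hkl⟩) * dot (AnmVec n m a) (AnmVec n m (Sum.inl ⟨(k, l), hkl⟩))
          / dot (AnmVec n m (Sum.inl ⟨(k, l), hkl⟩)) x
        = m * (AnmVec n m a k.castSucc - AnmVec n m a l.castSucc)
            / (x k.castSucc - x l.castSucc) := by
    intro k l hkl
    rw [dot_comm' (AnmVec n m a), dot_inl, dot_inl]
    rfl
  have hFr : ∀ (k : Fin n),
      AnmMult n m (Sum.inr k) * dot (AnmVec n m a) (AnmVec n m (Sum.inr k))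
          / dot (AnmVec n m (Sum.inr k)) x
        = (AnmVec n m a k.castSucc - Real.sqrt m * AnmVec n m a (Fin.last n))
            / (x k.castSucc - Real.sqrt m * x (Fin.last n)) := by
    intro k
    rw [dot_comm' (AnmVec n m a), dot_inr, dot_inr]
    show 1 * _ / _ = _
    rw [one_mul]
  have hFmk : ∀ (u v : Fin n) (huv : u ≠ v),
      AnmMult n m (Sum.inl (mkP u v huv)) * dot (AnmVec n m a) (AnmVec n m (Sum.inl (mkP u v huv)))
          / dot (AnmVec n m (Sum.inl (mkP u v huv))) x
        = m * (AnmVec n m a u.castSucc - AnmVec n m a v.castSucc)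
            / (x u.castSucc - x v.castSucc) := by
    intro u v huv
    by_cases h : u < v
    · rw [mkP_of_lt huv h, hFl]
    · have h' : v < u := huv.lt_or_gt.resolve_left h
      rw [mkP_of_gt huv h', hFl]
      rw [show AnmVec n m a v.castSucc - AnmVec n m a u.castSucc
            = -(AnmVec n m a u.castSucc - AnmVec n m a v.castSucc) by ring,
        show x v.castSucc - x u.castSucc = -(x u.castSucc - x v.castSucc) by ring,
        mul_neg, neg_div_neg_eq]
  rcases a with q | q
  · -- case α = eᵢ - eⱼ
    obtain ⟨⟨i, j⟩, hij⟩ := q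
    have hij'' : i < j := hij
    have hij' : i ≠ j := hij''.ne
    have hee : ∀ t : Fin n, (Equiv.swap i j) ((Equiv.swap i j) t) = t :=
      fun t => Equiv.swap_apply_self i j t
    have hAc : ∀ t : Fin n, AnmVec n m (Sum.inl ⟨(i, j), hij⟩) t.castSucc
        = if t = i then 1 else if t = j then -1 else 0 := by
      intro t; simp [AnmVec, Fin.castSucc_inj]
    have hAlast : AnmVec n m (Sum.inl ⟨(i, j), hij⟩) (Fin.last n) = 0 := by
      simp [AnmVec, (Fin.castSucc_lt_last i).ne', (Fin.castSucc_lt_last j).ne']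
    have hxij : x i.castSucc = x j.castSucc := by
      rw [dot_inl] at hax
      exact sub_eq_zero.mp hax
    have hAe : ∀ t : Fin n, AnmVec n m (Sum.inl ⟨(i, j), hij⟩) ((Equiv.swap i j) t).castSucc
        = -(AnmVec n m (Sum.inl ⟨(i, j), hij⟩) t.castSucc) := by
      intro t
      rcases eq_or_ne t i with rfl | hti
      · rw [Equiv.swap_apply_left, hAc, hAc]; simp [hij', hij'.symm]
      rcases eq_or_ne t j with rfl | htj
      · rw [Equiv.swap_apply_right, hAc, hAc]; simp [hij', hij'.symm]
      · rw [Equiv.swap_apply_of_ne_of_ne hti htj, hAc]; simp [hti, htj]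
    have hxe : ∀ t : Fin n, x ((Equiv.swap i j) t).castSucc = x t.castSucc := by
      intro t
      rcases eq_or_ne t i with rfl | hti
      · rw [Equiv.swap_apply_left]; exact hxij.symm
      rcases eq_or_ne t j with rfl | htj
      · rw [Equiv.swap_apply_right]; exact hxij
      · rw [Equiv.swap_apply_of_ne_of_ne hti htj]
    have hcancel : ∀ b : AnmIdx n,
        (AnmMult n m b * dot (AnmVec n m (Sum.inl ⟨(i, j), hij⟩)) (AnmVec n m b)
            / dot (AnmVec n m b) x)
          + (AnmMult n m (swapIdx i j b)
              * dot (AnmVec n m (Sum.inl ⟨(i, j), hij⟩)) (AnmVec n m (swapIdx i j b))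
              / dot (AnmVec n m (swapIdx i j b)) x) = 0 := by
      rintro (⟨⟨k, l⟩, hkl⟩ | k)
      · rw [swapIdx_inl i j k l hkl, hFl k l hkl, hFmk, hAe, hAe, hxe, hxe]
        ring
      · rw [swapIdx_inr, hFr, hFr, hAe, hxe, hAlast]
        ring
    refine Finset.sum_involution (fun b _ => swapIdx i j b) (fun b _ => hcancel b) ?_ ?_ ?_
    · intro b _ hfb hgb
      have h2 := hcancel b
      have hgb' : swapIdx i j b = b := hgb
      rw [hgb'] at h2
      exact hfb (by linarith)
    · rintro (⟨⟨k, l⟩, hkl⟩ | k) hb <;>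
        simp only [Finset.mem_filter, Finset.mem_univ, true_and] at hb ⊢
      · rw [swapIdx_inl i j k l hkl]
        intro hcon
        rw [Sum.inl.injEq] at hcon
        have hval : (mkP ((Equiv.swap i j) k) ((Equiv.swap i j) l)
            ((Equiv.swap i j).injective.ne hkl.ne)).1 = ((i, j) : Fin n × Fin n) := by
          rw [hcon]
        by_cases hlt : (Equiv.swap i j) k < (Equiv.swap i j) l
        · rw [mkP_of_lt _ hlt] at hval
          have hk : (Equiv.swap i j) k = i := congrArg Prod.fst hval
          have hl : (Equiv.swap i j) l = j := congrArg Prod.snd hval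
          have hki : k = j := by rw [← hee k, hk, Equiv.swap_apply_left]
          have hlj : l = i := by rw [← hee l, hl, Equiv.swap_apply_right]
          have : (k : Fin n) < l := hkl
          rw [hki, hlj] at this
          exact absurd this (asymm hij'')
        · have hgt : (Equiv.swap i j) l < (Equiv.swap i j) k :=
            (((Equiv.swap i j).injective.ne hkl.ne).lt_or_gt).resolve_left hlt
          rw [mkP_of_gt _ hgt] at hval
          have hk : (Equiv.swap i j) l = i := congrArg Prod.fst hval
          have hl : (Equiv.swap i j) k = j := congrArg Prod.snd hval
          have hki : k = i := by rw [← hee k, hl, Equiv.swap_apply_right]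
          have hlj : l = j := by rw [← hee l, hk, Equiv.swap_apply_left]
          apply hb
          subst hki; subst hlj; rfl
      · rw [swapIdx_inr]
        simp
    · rintro (⟨⟨k, l⟩, hkl⟩ | k) hb
      · show swapIdx i j (swapIdx i j (Sum.inl ⟨(k, l), hkl⟩)) = Sum.inl ⟨(k, l), hkl⟩
        rw [swapIdx_inl i j k l hkl]
        by_cases h1 : (Equiv.swap i j) k < (Equiv.swap i j) l
        · rw [mkP_of_lt _ h1, swapIdx_inl]
          simp only [hee]
          rw [mkP_of_lt _ hkl]
        · have hgt : (Equiv.swap i j) l < (Equiv.swap i j) k :=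
            (((Equiv.swap i j).injective.ne hkl.ne).lt_or_gt).resolve_left h1
          rw [mkP_of_gt _ hgt, swapIdx_inl]
          simp only [hee]
          rw [mkP_of_gt _ hkl]
      · show swapIdx i j (swapIdx i j (Sum.inr k)) = Sum.inr k
        rw [swapIdx_inr, swapIdx_inr, hee]
  · -- case α = eᵢ - √m e_{n+1}
    have hAc : ∀ t : Fin n, AnmVec n m (Sum.inr q) t.castSucc = if t = q then 1 else 0 := by
      intro t
      simp [AnmVec, Fin.castSucc_inj, (Fin.castSucc_lt_last t).ne]
    have hAlast : AnmVec n m (Sum.inr q) (Fin.last n) = -(Real.sqrt m) := by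
      simp [AnmVec, (Fin.castSucc_lt_last q).ne']
    have hxq : x q.castSucc = Real.sqrt m * x (Fin.last n) := by
      rw [dot_inr] at hax
      exact sub_eq_zero.mp hax
    have hsq : Real.sqrt m * Real.sqrt m = m := Real.mul_self_sqrt hm.le
    have hcancel : ∀ b : AnmIdx n,
        (AnmMult n m b * dot (AnmVec n m (Sum.inr q)) (AnmVec n m b) / dot (AnmVec n m b) x)
          + (AnmMult n m (qIdx q b) * dot (AnmVec n m (Sum.inr q)) (AnmVec n m (qIdx q b))
              / dot (AnmVec n m (qIdx q b)) x) = 0 := by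
      rintro (⟨⟨k, l⟩, hkl⟩ | k)
      · by_cases hk : k = q
        · subst hk
          have hlq : l ≠ k := (hkl.ne).symm
          rw [qIdx_inl_left k l hkl, hFl k l hkl, hFr]
          simp only [hAc, hAlast]
          rw [if_pos trivial, if_neg hlq, ← hxq]
          rw [show (0:ℝ) - Real.sqrt m * -(Real.sqrt m) = m by linear_combination hsq]
          rw [show x l.castSucc - x k.castSucc = -(x k.castSucc - x l.castSucc) by ring, div_neg]
          ring
        · by_cases hl : l = q
          · subst hl
            rw [qIdx_inl_right l k hkl, hFl k l hkl, hFr]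
            simp only [hAc, hAlast]
            rw [if_pos trivial, if_neg hk, ← hxq]
            rw [show (0:ℝ) - Real.sqrt m * -(Real.sqrt m) = m by linear_combination hsq]
            ring
          · rw [qIdx_inl_other q k l hkl hk hl, hFl k l hkl]
            simp only [hAc]
            rw [if_neg hk, if_neg hl]
            ring
      · by_cases hk : k = q
        · subst hk
          rw [qIdx_inr_self]
          have h0 : dot (AnmVec n m (Sum.inr k)) x = 0 := hax
          rw [h0]; simp
        · rw [qIdx_inr q k hk, hFr, hFmk]
          simp only [hAc, hAlast]
          rw [if_pos trivial, if_neg hk, ← hxq]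
          rw [show (0:ℝ) - Real.sqrt m * -(Real.sqrt m) = m by linear_combination hsq]
          rw [show x q.castSucc - x k.castSucc = -(x k.castSucc - x q.castSucc) by ring, div_neg]
          ring
    refine Finset.sum_involution (fun b _ => qIdx q b) (fun b _ => hcancel b) ?_ ?_ ?_
    · intro b _ hfb hgb
      have h2 := hcancel b
      have hgb' : qIdx q b = b := hgb
      rw [hgb'] at h2
      exact hfb (by linarith)
    · rintro (⟨⟨k, l⟩, hkl⟩ | k) hb <;>
        simp only [Finset.mem_filter, Finset.mem_univ, true_and] at hb ⊢
      · by_cases hk : k = q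
        · subst hk
          rw [qIdx_inl_left k l hkl]
          simp [(hkl.ne).symm]
        · by_cases hl : l = q
          · subst hl
            rw [qIdx_inl_right l k hkl]
            simp [hkl.ne]
          · rw [qIdx_inl_other q k l hkl hk hl]
            simp
      · have hk : k ≠ q := fun h => hb (by rw [h])
        rw [qIdx_inr q k hk]
        simp
    · rintro (⟨⟨k, l⟩, hkl⟩ | k) hb
      · show qIdx q (qIdx q (Sum.inl ⟨(k, l), hkl⟩)) = Sum.inl ⟨(k, l), hkl⟩
        by_cases hk : k = q
        · subst hk
          have hlq : l ≠ k := (hkl.ne).symm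
          rw [qIdx_inl_left k l hkl, qIdx_inr k l hlq, mkP_of_lt _ hkl]
        · by_cases hl : l = q
          · subst hl
            rw [qIdx_inl_right l k hkl, qIdx_inr l k hk, mkP_of_gt _ hkl]
          · rw [qIdx_inl_other q k l hkl hk hl, qIdx_inl_other q k l hkl hk hl]
      · show qIdx q (qIdx q (Sum.inr k)) = Sum.inr k
        by_cases hk : k = q
        · subst hk
          rw [qIdx_inr_self, qIdx_inr_self]
        · rw [qIdx_inr q k hk]
          by_cases hq : q < k
          · rw [mkP_of_lt _ hq, qIdx_inl_left q k hq]
          · have h' : k < q := (Ne.lt_or_gt hk).resolve_right hq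
            rw [mkP_of_gt _ h', qIdx_inl_right q k h']
end

section
/- For the configuration C₂(m,l) in ℂ², a homogeneous polynomial q(x,y) = ∑_{i=0}^{n} aᵢ xⁱ y^{n-i} of odd degree n is quasi-invariant if and only if: a₁ = a₃ = ... = a_{2m-1} = 0, a_{n-1} = a_{n-3} = ... = a_{n-2l+1} = 0, ∑_{i even} aᵢ ξ^{n-i-1}((n-i) - ξ² i) = 0, and ∑_{i odd} aᵢ ξ^{n-i-1}((n-i) - ξ² i) = 0, where ξ² = (2l+1)/(2m+1). -/
open MvPolynomial

/-- Evaluation at the point `(x, y) ∈ ℂ²`, as a linear map on polynomials. -/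
noncomputable def evalAt (x y : ℂ) : MvPolynomial (Fin 2) ℂ →ₗ[ℂ] ℂ :=
  (MvPolynomial.aeval ![x, y]).toLinearMap

/-- The directional derivative `a·∂_x + b·∂_y` on polynomials in two variables. -/
noncomputable def dirD (a b : ℂ) : Module.End ℂ (MvPolynomial (Fin 2) ℂ) :=
  a • (MvPolynomial.pderiv 0).toLinearMap + b • (MvPolynomial.pderiv 1).toLinearMap

/-- The submodule of quasi-invariants of the configuration `C₂(m,l)`: the line `x = 0` carries
multiplicity `m`, the line `y = 0` multiplicity `l`, and the lines `ξx ± y = 0` (normal vectors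
`ξe₁ ± e₂`) multiplicity `1`, where `ξ² = (2l+1)/(2m+1)`. A polynomial `q` is quasi-invariant
if the odd normal derivatives `∂_α^{2r-1} q`, `r = 1,...,m_α`, vanish on each line. -/
noncomputable def quasiC (m l : ℕ) (ξ : ℂ) : Submodule ℂ (MvPolynomial (Fin 2) ℂ) :=
  (⨅ r ∈ Finset.Icc 1 m, ⨅ y : ℂ,
    LinearMap.ker ((evalAt 0 y).comp ((dirD 1 0 ^ (2 * r - 1) : Module.End ℂ _) :
      MvPolynomial (Fin 2) ℂ →ₗ[ℂ] MvPolynomial (Fin 2) ℂ))) ⊓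
  (⨅ r ∈ Finset.Icc 1 l, ⨅ x : ℂ,
    LinearMap.ker ((evalAt x 0).comp ((dirD 0 1 ^ (2 * r - 1) : Module.End ℂ _) :
      MvPolynomial (Fin 2) ℂ →ₗ[ℂ] MvPolynomial (Fin 2) ℂ))) ⊓
  (⨅ t : ℂ, LinearMap.ker ((evalAt t (-(ξ * t))).comp (dirD ξ 1))) ⊓
  (⨅ t : ℂ, LinearMap.ker ((evalAt t (ξ * t)).comp (dirD ξ (-1))))

lemma evalAt_mon (x y : ℂ) (c : ℂ) (i j : ℕ) :
    evalAt x y (C c * X 0 ^ i * X 1 ^ j) = c * x ^ i * y ^ j := by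
  simp [evalAt]

lemma pd0_mon (c : ℂ) (i j : ℕ) :
    pderiv (0 : Fin 2) (C c * X 0 ^ i * X 1 ^ j : MvPolynomial (Fin 2) ℂ)
      = C (c * i) * X 0 ^ (i - 1) * X 1 ^ j := by
  cases i with
  | zero => simp
  | succ k => simp [pderiv_mul, pderiv_pow, mul_comm, mul_assoc, mul_left_comm]

lemma pd1_mon (c : ℂ) (i j : ℕ) :
    pderiv (1 : Fin 2) (C c * X 0 ^ i * X 1 ^ j : MvPolynomial (Fin 2) ℂ)
      = C (c * j) * X 0 ^ i * X 1 ^ (j - 1) := by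
  cases j with
  | zero => simp
  | succ k => simp [pderiv_mul, pderiv_pow, mul_comm, mul_assoc, mul_left_comm]

lemma dirD_one_zero (p : MvPolynomial (Fin 2) ℂ) : dirD 1 0 p = pderiv 0 p := by
  simp [dirD]

lemma dirD_zero_one (p : MvPolynomial (Fin 2) ℂ) : dirD 0 1 p = pderiv 1 p := by
  simp [dirD]

lemma pow_pd0_mon (k : ℕ) (c : ℂ) (i j : ℕ) :
    ((dirD 1 0 ^ k : Module.End ℂ _)) (C c * X 0 ^ i * X 1 ^ j : MvPolynomial (Fin 2) ℂ)
      = C (c * (i.descFactorial k)) * X 0 ^ (i - k) * X 1 ^ j := by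
  induction k generalizing c i with
  | zero => simp
  | succ k ih =>
    have hdf : (i.descFactorial (k + 1) : ℂ) = i * (i - 1).descFactorial k := by
      cases i with
      | zero => simp
      | succ p => rw [Nat.succ_descFactorial_succ]; push_cast; ring
    rw [pow_succ, Module.End.mul_apply, dirD_one_zero, pd0_mon,
      ih, hdf, Nat.sub_sub, add_comm 1 k]
    ring_nf

lemma pow_pd1_mon (k : ℕ) (c : ℂ) (i j : ℕ) :
    ((dirD 0 1 ^ k : Module.End ℂ _)) (C c * X 0 ^ i * X 1 ^ j : MvPolynomial (Fin 2) ℂ)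
      = C (c * (j.descFactorial k)) * X 0 ^ i * X 1 ^ (j - k) := by
  induction k generalizing c j with
  | zero => simp
  | succ k ih =>
    have hdf : (j.descFactorial (k + 1) : ℂ) = j * (j - 1).descFactorial k := by
      cases j with
      | zero => simp
      | succ p => rw [Nat.succ_descFactorial_succ]; push_cast; ring
    rw [pow_succ, Module.End.mul_apply, dirD_zero_one, pd1_mon,
      ih, hdf, Nat.sub_sub, add_comm 1 k]
    ring_nf

lemma E1 (n : ℕ) (a : ℕ → ℂ) (y : ℂ) (k : ℕ) :
    evalAt 0 y ((dirD 1 0 ^ k : Module.End ℂ _)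
        (∑ i ∈ Finset.range (n + 1), C (a i) * X 0 ^ i * X 1 ^ (n - i)))
      = if k ≤ n then a k * k.factorial * y ^ (n - k) else 0 := by
  rw [map_sum, map_sum]
  simp only [pow_pd0_mon, evalAt_mon]
  split_ifs with h
  · rw [Finset.sum_eq_single k]
    · simp [Nat.descFactorial_self]
    · intro i hi hik
      rcases lt_or_gt_of_ne hik with h1 | h1
      · have : i.descFactorial k = 0 := Nat.descFactorial_eq_zero_iff_lt.mpr h1
        simp [this]
      · have : i - k ≠ 0 := by omega
        simp [zero_pow this]
    · intro hk; exact absurd (Finset.mem_range.mpr (by omega)) hk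
  · apply Finset.sum_eq_zero
    intro i hi
    have : i.descFactorial k = 0 := Nat.descFactorial_eq_zero_iff_lt.mpr
      (by simp at hi; omega)
    simp [this]

lemma E2 (n : ℕ) (a : ℕ → ℂ) (x : ℂ) (k : ℕ) :
    evalAt x 0 ((dirD 0 1 ^ k : Module.End ℂ _)
        (∑ i ∈ Finset.range (n + 1), C (a i) * X 0 ^ i * X 1 ^ (n - i)))
      = if k ≤ n then a (n - k) * k.factorial * x ^ (n - k) else 0 := by
  rw [map_sum, map_sum]
  simp only [pow_pd1_mon, evalAt_mon]
  split_ifs with h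
  · rw [Finset.sum_eq_single (n - k)]
    · have h1 : n - (n - k) = k := by omega
      simp [h1, Nat.descFactorial_self]
    · intro i hi hik
      simp only [Finset.mem_range] at hi
      rcases lt_or_gt_of_ne (show n - i ≠ k by omega) with h1 | h1
      · have : (n - i).descFactorial k = 0 := Nat.descFactorial_eq_zero_iff_lt.mpr h1
        simp [this]
      · have : n - i - k ≠ 0 := by omega
        simp [zero_pow this]
    · intro hk; exact absurd (Finset.mem_range.mpr (by omega)) hk
  · apply Finset.sum_eq_zero
    intro i hi
    have : (n - i).descFactorial k = 0 := Nat.descFactorial_eq_zero_iff_lt.mpr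
      (by simp at hi; omega)
    simp [this]

lemma eval_dirD_mon (α β x y c : ℂ) (i j : ℕ) :
    evalAt x y (dirD α β (C c * X 0 ^ i * X 1 ^ j)) =
      c * α * i * x ^ (i - 1) * y ^ j + c * β * j * x ^ i * y ^ (j - 1) := by
  simp only [dirD, LinearMap.add_apply, LinearMap.smul_apply, Derivation.coeFn_coe,
    pd0_mon, pd1_mon, map_add, map_smul, smul_eq_mul, evalAt_mon]
  ring

lemma E3 (n : ℕ) (hn : Odd n) (a : ℕ → ℂ) (ξ : ℂ) (hξ0 : ξ ≠ 0) (t : ℂ) :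
    evalAt t (-(ξ * t)) (dirD ξ 1
        (∑ i ∈ Finset.range (n + 1), C (a i) * X 0 ^ i * X 1 ^ (n - i)))
      = t ^ (n - 1) * ∑ i ∈ Finset.range (n + 1),
          (-1 : ℂ) ^ i * (a i * ξ ^ ((n : ℤ) - i - 1) * (((n : ℂ) - i) - ξ ^ 2 * i)) := by
  have hn2 : n % 2 = 1 := Nat.odd_iff.mp hn
  rw [map_sum, map_sum, Finset.mul_sum]
  refine Finset.sum_congr rfl ?_
  intro i hi
  simp only [Finset.mem_range] at hi
  rw [eval_dirD_mon]
  by_cases h1 : i = n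
  · subst h1
    have hz : ξ ^ ((i : ℤ) - i - 1) = ξ⁻¹ := by
      rw [show (i : ℤ) - i - 1 = -1 by ring, zpow_neg_one]
    have hsgn : (-1 : ℂ) ^ i = -1 := hn.neg_one_pow
    rw [hz, hsgn, Nat.sub_self]
    simp only [Nat.cast_zero, pow_zero, mul_zero, zero_mul, mul_one, add_zero]
    field_simp
    ring
  · by_cases h0 : i = 0
    · subst h0
      obtain ⟨d, hd⟩ : ∃ d, n = d + 1 := ⟨n - 1, by omega⟩
      have hsgn : (-1 : ℂ) ^ d = 1 := (Nat.even_iff.mpr (by omega)).neg_one_pow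
      have hz : ξ ^ ((n : ℤ) - 1) = ξ ^ d := by
        rw [show (n : ℤ) - 1 = (d : ℤ) by push_cast [hd]; ring, zpow_natCast]
      simp only [Nat.cast_zero, Nat.sub_zero, sub_zero]
      rw [hz, hd]
      simp only [Nat.add_sub_cancel, neg_pow (ξ * t), mul_pow, hsgn]
      push_cast
      ring
    · obtain ⟨e, d, he, hd⟩ : ∃ e d, i = e + 1 ∧ n = e + d + 2 :=
        ⟨i - 1, n - i - 1, by omega, by omega⟩
      have hz : ξ ^ ((n : ℤ) - i - 1) = ξ ^ d := by
        rw [show (n : ℤ) - i - 1 = (d : ℤ) by push_cast [he, hd]; ring, zpow_natCast]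
      have h1' : (-1 : ℂ) ^ e * (-1 : ℂ) ^ d = -1 := by
        rw [← pow_add]; exact (Nat.odd_iff.mpr (by omega)).neg_one_pow
      have h2' : ((-1 : ℂ) ^ d) * ((-1 : ℂ) ^ d) = 1 := by
        rw [← pow_add]; exact Even.neg_one_pow ⟨d, rfl⟩
      have hsgn : (-1 : ℂ) ^ i = (-1 : ℂ) ^ d := by
        rw [he, pow_succ]
        linear_combination (-((-1 : ℂ) ^ d)) * h1' + ((-1 : ℂ) ^ e) * h2'
      rw [hz, hsgn]
      subst he; subst hd
      simp only [show e + 1 - 1 = e from by omega, show e + d + 2 - (e + 1) = d + 1 from by omega,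
        show e + d + 2 - (e + 1) - 1 = d from by omega, show e + d + 2 - 1 = e + d + 1 from by omega,
        neg_pow (ξ * t), mul_pow]
      push_cast
      ring

lemma E4 (n : ℕ) (a : ℕ → ℂ) (ξ : ℂ) (hξ0 : ξ ≠ 0) (t : ℂ) :
    evalAt t (ξ * t) (dirD ξ (-1)
        (∑ i ∈ Finset.range (n + 1), C (a i) * X 0 ^ i * X 1 ^ (n - i)))
      = -(t ^ (n - 1)) * ∑ i ∈ Finset.range (n + 1),
          (a i * ξ ^ ((n : ℤ) - i - 1) * (((n : ℂ) - i) - ξ ^ 2 * i)) := by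
  rw [map_sum, map_sum, Finset.mul_sum]
  refine Finset.sum_congr rfl ?_
  intro i hi
  simp only [Finset.mem_range] at hi
  rw [eval_dirD_mon]
  by_cases h1 : i = n
  · subst h1
    have hz : ξ ^ ((i : ℤ) - i - 1) = ξ⁻¹ := by
      rw [show (i : ℤ) - i - 1 = -1 by ring, zpow_neg_one]
    rw [hz, Nat.sub_self]
    simp only [Nat.cast_zero, pow_zero, mul_zero, zero_mul, mul_one, add_zero]
    field_simp
    ring
  · by_cases h0 : i = 0
    · subst h0
      obtain ⟨d, hd⟩ : ∃ d, n = d + 1 := ⟨n - 1, by omega⟩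
      simp only [Nat.cast_zero, Nat.sub_zero, sub_zero]
      have hz : ξ ^ ((n : ℤ) - 1) = ξ ^ d := by
        rw [show (n : ℤ) - 1 = (d : ℤ) by push_cast [hd]; ring, zpow_natCast]
      rw [hz, hd]
      simp only [Nat.add_sub_cancel, mul_pow]
      push_cast
      ring
    · obtain ⟨e, d, he, hd⟩ : ∃ e d, i = e + 1 ∧ n = e + d + 2 :=
        ⟨i - 1, n - i - 1, by omega, by omega⟩
      have hz : ξ ^ ((n : ℤ) - i - 1) = ξ ^ d := by
        rw [show (n : ℤ) - i - 1 = (d : ℤ) by push_cast [he, hd]; ring, zpow_natCast]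
      rw [hz]
      subst he; subst hd
      simp only [show e + 1 - 1 = e from by omega, show e + d + 2 - (e + 1) = d + 1 from by omega,
        show e + d + 2 - (e + 1) - 1 = d from by omega, show e + d + 2 - 1 = e + d + 1 from by omega,
        mul_pow]
      push_cast
      ring

/-- Characterization of quasi-invariance for `C₂(m,l)` of a homogeneous polynomial
`q = ∑ᵢ aᵢ xⁱ y^{n-i}` of odd degree `n`: the odd coefficients up to `a_{2m-1}` vanish,
the coefficients `a_{n-1}, a_{n-3}, ..., a_{n-(2l-1)}` vanish, and the two linear conditions
`∑ aᵢ ξ^{n-i-1}((n-i) - ξ²i) = 0` over even and over odd `i` hold. -/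
theorem quasiC_odd_degree_characterization (m l n : ℕ) (hm : 1 ≤ m) (hl : 1 ≤ l)
    (hn : Odd n) (ξ : ℂ) (hξ : ξ ^ 2 = (2 * (l : ℂ) + 1) / (2 * (m : ℂ) + 1)) (a : ℕ → ℂ) :
    (∑ i ∈ Finset.range (n + 1), C (a i) * X 0 ^ i * X 1 ^ (n - i)) ∈ quasiC m l ξ ↔
      (∀ i ≤ n, Odd i → i ≤ 2 * m - 1 → a i = 0) ∧
      (∀ i ≤ n, Odd (n - i) → n - i ≤ 2 * l - 1 → a i = 0) ∧
      (∑ i ∈ (Finset.range (n + 1)).filter (fun i => Even i),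
        a i * ξ ^ ((n : ℤ) - i - 1) * (((n : ℂ) - i) - ξ ^ 2 * i) = 0) ∧
      (∑ i ∈ (Finset.range (n + 1)).filter (fun i => Odd i),
        a i * ξ ^ ((n : ℤ) - i - 1) * (((n : ℂ) - i) - ξ ^ 2 * i) = 0) := by
  have hn2 : n % 2 = 1 := Nat.odd_iff.mp hn
  set q : MvPolynomial (Fin 2) ℂ := ∑ i ∈ Finset.range (n + 1), C (a i) * X 0 ^ i * X 1 ^ (n - i)
    with hq
  -- ξ ≠ 0
  have hlc : (2 * (l : ℂ) + 1) ≠ 0 := by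
    have : (2 * (l : ℂ) + 1) = ((2 * l + 1 : ℕ) : ℂ) := by push_cast; ring
    rw [this]; exact Nat.cast_ne_zero.mpr (by omega)
  have hmc : (2 * (m : ℂ) + 1) ≠ 0 := by
    have : (2 * (m : ℂ) + 1) = ((2 * m + 1 : ℕ) : ℂ) := by push_cast; ring
    rw [this]; exact Nat.cast_ne_zero.mpr (by omega)
  have hξ0 : ξ ≠ 0 := by
    intro h
    rw [h] at hξ
    have h0 : ((2 * (l:ℂ) + 1) / (2 * (m:ℂ) + 1)) = 0 := by rw [← hξ]; norm_num
    rcases div_eq_zero_iff.mp h0 with h' | h'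
    · exact hlc h'
    · exact hmc h'
  have hmem : q ∈ quasiC m l ξ ↔
      (∀ r ∈ Finset.Icc 1 m, ∀ y : ℂ,
        evalAt 0 y ((dirD 1 0 ^ (2 * r - 1) : Module.End ℂ _) q) = 0) ∧
      (∀ r ∈ Finset.Icc 1 l, ∀ x : ℂ,
        evalAt x 0 ((dirD 0 1 ^ (2 * r - 1) : Module.End ℂ _) q) = 0) ∧
      (∀ t : ℂ, evalAt t (-(ξ * t)) (dirD ξ 1 q) = 0) ∧
      (∀ t : ℂ, evalAt t (ξ * t) (dirD ξ (-1) q) = 0) := by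
    simp only [quasiC, Submodule.mem_inf, Submodule.mem_iInf, LinearMap.mem_ker, LinearMap.coe_comp,
      Function.comp_apply, and_assoc]
  rw [hmem]
  clear hmem
  have hfac : ∀ k : ℕ, ((k.factorial : ℂ)) ≠ 0 :=
    fun k => Nat.cast_ne_zero.mpr k.factorial_ne_zero
  have hA : (∀ r ∈ Finset.Icc 1 m, ∀ y : ℂ,
      evalAt 0 y ((dirD 1 0 ^ (2 * r - 1) : Module.End ℂ _) q) = 0) ↔
      (∀ i ≤ n, Odd i → i ≤ 2 * m - 1 → a i = 0) := by
    constructor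
    · intro hA i hin hodd him
      have hio : i % 2 = 1 := Nat.odd_iff.mp hodd
      have hr : (i + 1) / 2 ∈ Finset.Icc 1 m := Finset.mem_Icc.mpr ⟨by omega, by omega⟩
      have := hA ((i + 1) / 2) hr 1
      rw [hq, E1 n a 1 (2 * ((i + 1) / 2) - 1)] at this
      rw [if_pos (by omega), one_pow, mul_one] at this
      have hii : 2 * ((i + 1) / 2) - 1 = i := by omega
      rw [hii] at this
      exact (mul_eq_zero.mp this).resolve_right (hfac i)
    · intro hA r hr y
      simp only [Finset.mem_Icc] at hr
      rw [hq, E1 n a y (2 * r - 1)]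
      split_ifs with h
      · rw [hA (2 * r - 1) h (Nat.odd_iff.mpr (by omega)) (by omega)]
        ring
      · rfl
  have hB : (∀ r ∈ Finset.Icc 1 l, ∀ x : ℂ,
      evalAt x 0 ((dirD 0 1 ^ (2 * r - 1) : Module.End ℂ _) q) = 0) ↔
      (∀ i ≤ n, Odd (n - i) → n - i ≤ 2 * l - 1 → a i = 0) := by
    constructor
    · intro hB i hin hodd hil
      have hio : (n - i) % 2 = 1 := Nat.odd_iff.mp hodd
      have hr : (n - i + 1) / 2 ∈ Finset.Icc 1 l := Finset.mem_Icc.mpr ⟨by omega, by omega⟩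
      have := hB ((n - i + 1) / 2) hr 1
      rw [hq, E2 n a 1 (2 * ((n - i + 1) / 2) - 1)] at this
      rw [if_pos (by omega), one_pow, mul_one] at this
      have hii : n - (2 * ((n - i + 1) / 2) - 1) = i := by omega
      rw [hii] at this
      exact (mul_eq_zero.mp this).resolve_right (hfac _)
    · intro hB r hr x
      simp only [Finset.mem_Icc] at hr
      rw [hq, E2 n a x (2 * r - 1)]
      split_ifs with h
      · rw [hB (n - (2 * r - 1)) (by omega) (Nat.odd_iff.mpr (by omega)) (by omega)]
        ring
      · rfl
  rw [hA, hB]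
  -- the two lines of multiplicity one
  set f : ℕ → ℂ := fun i => a i * ξ ^ ((n : ℤ) - i - 1) * (((n : ℂ) - i) - ξ ^ 2 * i) with hf
  have hS : (∑ i ∈ Finset.range (n + 1), (-1 : ℂ) ^ i * f i)
      = (∑ i ∈ (Finset.range (n + 1)).filter (fun i => Even i), f i)
        - (∑ i ∈ (Finset.range (n + 1)).filter (fun i => Odd i), f i) := by
    rw [← Finset.sum_filter_add_sum_filter_not (Finset.range (n + 1)) (fun i => Even i)
      (fun i => (-1 : ℂ) ^ i * f i)]
    have e1 : ∀ i ∈ (Finset.range (n + 1)).filter (fun i => Even i),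
        (-1 : ℂ) ^ i * f i = f i := by
      intro i hi
      rw [(Finset.mem_filter.mp hi).2.neg_one_pow, one_mul]
    have e2 : ∀ i ∈ (Finset.range (n + 1)).filter (fun i => ¬ Even i),
        (-1 : ℂ) ^ i * f i = -f i := by
      intro i hi
      rw [(Nat.not_even_iff_odd.mp (Finset.mem_filter.mp hi).2).neg_one_pow]
      ring
    have hfe : (Finset.range (n + 1)).filter (fun i => ¬ Even i)
        = (Finset.range (n + 1)).filter (fun i => Odd i) := by
      apply Finset.filter_congr
      intro i _
      simp [Nat.not_even_iff_odd]
    rw [Finset.sum_congr rfl e1, Finset.sum_congr rfl e2, Finset.sum_neg_distrib, hfe,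
      ← sub_eq_add_neg]
  have hT : (∑ i ∈ Finset.range (n + 1), f i)
      = (∑ i ∈ (Finset.range (n + 1)).filter (fun i => Even i), f i)
        + (∑ i ∈ (Finset.range (n + 1)).filter (fun i => Odd i), f i) := by
    have hfe : (Finset.range (n + 1)).filter (fun i => ¬ Even i)
        = (Finset.range (n + 1)).filter (fun i => Odd i) := by
      apply Finset.filter_congr
      intro i _
      simp [Nat.not_even_iff_odd]
    rw [← Finset.sum_filter_add_sum_filter_not (Finset.range (n + 1)) (fun i => Even i) f, hfe]
  have hCD : ((∀ t : ℂ, evalAt t (-(ξ * t)) (dirD ξ 1 q) = 0) ∧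
      (∀ t : ℂ, evalAt t (ξ * t) (dirD ξ (-1) q) = 0)) ↔
      ((∑ i ∈ (Finset.range (n + 1)).filter (fun i => Even i), f i) = 0 ∧
       (∑ i ∈ (Finset.range (n + 1)).filter (fun i => Odd i), f i) = 0) := by
    have hC : (∀ t : ℂ, evalAt t (-(ξ * t)) (dirD ξ 1 q) = 0) ↔
        (∑ i ∈ Finset.range (n + 1), (-1 : ℂ) ^ i * f i) = 0 := by
      constructor
      · intro h
        have := h 1
        rw [hq, E3 n hn a ξ hξ0 1, one_pow, one_mul] at this
        exact this
      · intro h t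
        rw [hq, E3 n hn a ξ hξ0 t, h, mul_zero]
    have hD : (∀ t : ℂ, evalAt t (ξ * t) (dirD ξ (-1) q) = 0) ↔
        (∑ i ∈ Finset.range (n + 1), f i) = 0 := by
      constructor
      · intro h
        have := h 1
        rw [hq, E4 n a ξ hξ0 1, one_pow] at this
        simpa using this
      · intro h t
        rw [hq, E4 n a ξ hξ0 t, h, mul_zero]
    rw [hC, hD, hS, hT]
    constructor
    · rintro ⟨u, v⟩
      constructor
      · linear_combination (u + v) / 2
      · linear_combination (v - u) / 2
    · rintro ⟨u, v⟩
      constructor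
      · linear_combination u - v
      · linear_combination u + v
  constructor
  · rintro ⟨h1, h2, h3, h4⟩
    exact ⟨h1, h2, (hCD.mp ⟨h3, h4⟩).1, (hCD.mp ⟨h3, h4⟩).2⟩
  · rintro ⟨h1, h2, h3, h4⟩
    exact ⟨h1, h2, (hCD.mpr ⟨h3, h4⟩).1, (hCD.mpr ⟨h3, h4⟩).2⟩
end

section
/- For positive integers m, l, the dimension of the space of homogeneous quasi-invariant polynomials of even degree n > 0 for C₂(m,l) that are even in each variable (only even powers of x and y appear) equals n/2. -/
open MvPolynomial

/-- The submodule of polynomials supported on a set `s` of monomials. -/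
noncomputable def suppOn (s : Set (Fin 2 →₀ ℕ)) : Submodule ℂ (MvPolynomial (Fin 2) ℂ) where
  carrier := {q | ∀ d, d ∉ s → MvPolynomial.coeff d q = 0}
  add_mem' := by
    intro p q hp hq d hd
    simp [MvPolynomial.coeff_add, hp d hd, hq d hd]
  zero_mem' := by intro d hd; simp
  smul_mem' := by
    intro c q hq d hd
    simp [MvPolynomial.coeff_smul, hq d hd]

/-! An even–even homogeneous polynomial `q` of degree `n` is a combination of the `n/2 + 1`
monomials `x^{2i} y^{n-2i}`. Its odd `x`-derivatives vanish on `x = 0` and its odd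
`y`-derivatives on `y = 0`, so the conditions on the coordinate axes hold automatically.
Since `(ξ∂ₓ + ∂_y) q` is homogeneous of degree `n - 1`, its vanishing on the line `ξx + y = 0` is
the single linear condition that it vanish at `(1, -ξ)`; the reflection `y ↦ -y`, which fixes `q`,
turns the condition on `ξx - y = 0` into the same one. This functional takes the value `nξ ≠ 0`
on `xⁿ`, so it cuts the dimension down by exactly one. -/

namespace MvPolynomial

variable {σ R : Type*}

lemma restrictSupport_inter [CommSemiring R] (s t : Set (σ →₀ ℕ)) :
    restrictSupport R (s ∩ t) = restrictSupport R s ⊓ restrictSupport R t := by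
  ext q
  simp only [Submodule.mem_inf, mem_restrictSupport_iff, Set.subset_inter_iff]

lemma homogeneousSubmodule_eq_restrictSupport [CommSemiring R] (n : ℕ) :
    homogeneousSubmodule σ R n = restrictSupport R {d | d.degree = n} :=
  homogeneousSubmodule_eq_finsupp_supported σ R n

lemma finrank_restrictSupport [CommRing R] [Nontrivial R] (s : Set (σ →₀ ℕ)) :
    Module.finrank R (restrictSupport R s) = Nat.card s :=
  Module.finrank_eq_nat_card_basis (basisRestrictSupport R s)

theorem IsHomogeneous.eval_smul [CommSemiring R] {φ : MvPolynomial σ R} {n : ℕ}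
    (hφ : φ.IsHomogeneous n) (c : R) (v : σ → R) :
    eval (c • v) φ = c ^ n * eval v φ := by
  rw [φ.as_sum]
  simp only [map_sum, Finset.mul_sum]
  refine Finset.sum_congr rfl fun d hd => ?_
  have hdeg : d.degree = n := by
    rw [Finsupp.degree_eq_weight_one]; exact hφ (mem_support_iff.mp hd)
  have hc : (d.prod fun _ e => c ^ e) = c ^ n := by
    rw [Finsupp.prod, Finset.prod_pow_eq_pow_sum, ← Finsupp.degree_apply, hdeg]
  simp only [eval_monomial, Pi.smul_apply, smul_eq_mul, mul_pow, Finsupp.prod_mul, hc]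
  ring

variable [CommSemiring R] {i : σ} {v : σ → R}

lemma eval_pderiv_pow_monomial_eq_zero (hv : v i = 0) {j : ℕ} {d : σ →₀ ℕ} (hj : j ≠ d i)
    (c : R) : eval v (((pderiv i).toLinearMap ^ j) (monomial d c)) = 0 := by
  induction j generalizing d c with
  | zero =>
    rw [pow_zero, Module.End.one_apply, eval_monomial, Finsupp.prod,
      Finset.prod_eq_zero (Finsupp.mem_support_iff.mpr hj.symm) (by rw [hv, zero_pow hj.symm]),
      mul_zero]
  | succ j ih =>
    rw [pow_succ, Module.End.mul_apply, Derivation.coeFn_coe, pderiv_monomial]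
    rcases Nat.eq_zero_or_pos (d i) with hd | hd
    · rw [hd, Nat.cast_zero, mul_zero, monomial_zero, map_zero, map_zero]
    · exact ih (by rw [Finsupp.tsub_apply, Finsupp.single_eq_same]; omega) _

lemma eval_pderiv_pow_eq_zero_of_odd (hv : v i = 0) {j : ℕ} (hj : Odd j) {q : MvPolynomial σ R}
    (hq : ∀ d ∈ q.support, Even (d i)) : eval v (((pderiv i).toLinearMap ^ j) q) = 0 := by
  rw [q.as_sum, map_sum, map_sum]
  refine Finset.sum_eq_zero fun d hd => eval_pderiv_pow_monomial_eq_zero hv ?_ _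
  rintro rfl
  exact Nat.not_even_iff_odd.mpr hj (hq d hd)

end MvPolynomial

lemma Submodule.finrank_inf_ker_add_one {K V : Type*} [Field K] [AddCommGroup V] [Module K V]
    {W : Submodule K V} [FiniteDimensional K W] {L : V →ₗ[K] K} (hL : ∃ w ∈ W, L w ≠ 0) :
    Module.finrank K ↥(W ⊓ LinearMap.ker L) + 1 = Module.finrank K W := by
  obtain ⟨w, hw, hLw⟩ := hL
  have hne : L.domRestrict W ≠ 0 := fun h => hLw (LinearMap.congr_fun h ⟨w, hw⟩)
  rw [← Module.Dual.finrank_ker_add_one_of_ne_zero hne, LinearMap.ker_domRestrict,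
    ← Submodule.finrank_map_subtype_eq, Submodule.map_comap_subtype]

lemma Even.natCast_mul_neg_pow_pred {R : Type*} [Ring R] {e : ℕ} (he : Even e) (u : R) :
    (e : R) * (-u) ^ (e - 1) = -((e : R) * u ^ (e - 1)) := by
  rcases Nat.eq_zero_or_pos e with rfl | he0
  · simp
  · rw [(Nat.Even.sub_odd he0 he odd_one).neg_pow, mul_neg]

lemma even_exponents_eq_image {n : ℕ} (hn : Even n) :
    {d : Fin 2 →₀ ℕ | d.degree = n ∧ Even (d 0) ∧ Even (d 1)} =
      ↑((Finset.range (n / 2 + 1)).image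
        (fun i => Finsupp.single (0 : Fin 2) (2 * i) + Finsupp.single 1 (n - 2 * i))) := by
  ext d
  simp only [Set.mem_ofPred_eq, Finset.coe_image, Finset.coe_range, Set.mem_image, Set.mem_Iio,
    Finsupp.degree_eq_sum, Fin.sum_univ_two]
  constructor
  · rintro ⟨hdeg, ⟨a, ha⟩, -⟩
    refine ⟨a, by omega, Finsupp.ext fun i => ?_⟩
    fin_cases i <;> simp only [Fin.zero_eta, Fin.mk_one, Finsupp.add_apply, Finsupp.single_apply,
      one_ne_zero, zero_ne_one, ↓reduceIte, add_zero, zero_add] <;> omega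
  · rintro ⟨i, hi, rfl⟩
    obtain ⟨k, rfl⟩ := hn
    simp only [Finsupp.add_apply, Finsupp.single_apply, one_ne_zero, zero_ne_one, ↓reduceIte,
      add_zero, zero_add]
    exact ⟨by omega, even_two_mul i, ⟨k - i, by omega⟩⟩

lemma card_even_exponents {n : ℕ} (hn : Even n) :
    Nat.card {d : Fin 2 →₀ ℕ | d.degree = n ∧ Even (d 0) ∧ Even (d 1)} = n / 2 + 1 := by
  rw [even_exponents_eq_image hn, Nat.card_coe_set_eq, Set.ncard_coe_finset,
    Finset.card_image_of_injective, Finset.card_range]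
  intro i j h
  simpa using congr_arg (· 0) h

lemma suppOn_eq_restrictSupport (s : Set (Fin 2 →₀ ℕ)) : suppOn s = restrictSupport ℂ s := by
  ext q
  simp only [mem_restrictSupport_iff, Set.subset_def, Finset.mem_coe, mem_support_iff]
  exact forall_congr' fun d => not_imp_comm

lemma evalAt_apply (x y : ℂ) (p : MvPolynomial (Fin 2) ℂ) : evalAt x y p = eval ![x, y] p := by
  simp [evalAt]

lemma dirD_one_zero_s8 : dirD 1 0 = (pderiv 0).toLinearMap := by simp [dirD]

lemma dirD_zero_one_s8 : dirD 0 1 = (pderiv 1).toLinearMap := by simp [dirD]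

lemma isHomogeneous_dirD {q : MvPolynomial (Fin 2) ℂ} {n : ℕ} (hq : q.IsHomogeneous n)
    (a b : ℂ) :
    (dirD a b q).IsHomogeneous (n - 1) :=
  (homogeneousSubmodule _ _ _).add_mem ((homogeneousSubmodule _ _ _).smul_mem a hq.pderiv)
    ((homogeneousSubmodule _ _ _).smul_mem b hq.pderiv)

lemma evalAt_dirD_monomial (a b x y c : ℂ) (d : Fin 2 →₀ ℕ) :
    evalAt x y (dirD a b (monomial d c)) =
      c * (a * d 0 * x ^ (d 0 - 1) * y ^ d 1 + b * d 1 * x ^ d 0 * y ^ (d 1 - 1)) := by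
  simp only [dirD, LinearMap.add_apply, LinearMap.smul_apply, Derivation.coeFn_coe,
    pderiv_monomial, evalAt_apply, map_add, smul_eval, eval_monomial, Finsupp.prod_fintype,
    Finsupp.coe_tsub, Pi.sub_apply, Finsupp.single_apply, Fin.prod_univ_two, Matrix.cons_val_zero,
    Matrix.cons_val_one, Matrix.cons_val_fin_one, zero_ne_one, one_ne_zero, ↓reduceIte, tsub_zero,
    pow_zero, implies_true]
  ring

noncomputable def normalDerivOnLine (ξ : ℂ) : MvPolynomial (Fin 2) ℂ →ₗ[ℂ] ℂ :=
  (evalAt 1 (-ξ)).comp (dirD ξ 1)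

lemma evalAt_dirD_line {q : MvPolynomial (Fin 2) ℂ} {n : ℕ} (hq : q.IsHomogeneous n) (ξ t : ℂ) :
    evalAt t (-(ξ * t)) (dirD ξ 1 q) = t ^ (n - 1) * normalDerivOnLine ξ q := by
  have hpt : ![t, -(ξ * t)] = t • ![1, -ξ] := by
    ext i; fin_cases i <;> simp [mul_comm]
  rw [normalDerivOnLine, LinearMap.comp_apply, evalAt_apply, evalAt_apply, hpt,
    (isHomogeneous_dirD hq ξ 1).eval_smul]

lemma evalAt_dirD_reflect {q : MvPolynomial (Fin 2) ℂ} (hq : ∀ d ∈ q.support, Even (d 1))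
    (a b x y : ℂ) : evalAt x y (dirD a (-b) q) = evalAt x (-y) (dirD a b q) := by
  rw [q.as_sum]
  simp only [map_sum]
  refine Finset.sum_congr rfl fun d hd => ?_
  rw [evalAt_dirD_monomial, evalAt_dirD_monomial, (hq d hd).neg_pow]
  linear_combination (-coeff d q * b * x ^ d 0) * (hq d hd).natCast_mul_neg_pow_pred y

lemma mem_quasiC_iff {m l n : ℕ} {ξ : ℂ} {q : MvPolynomial (Fin 2) ℂ}
    (hq : q ∈ restrictSupport ℂ {d : Fin 2 →₀ ℕ | d.degree = n ∧ Even (d 0) ∧ Even (d 1)}) :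
    q ∈ quasiC m l ξ ↔ normalDerivOnLine ξ q = 0 := by
  have hhom : q.IsHomogeneous n := by
    rw [← mem_homogeneousSubmodule, homogeneousSubmodule_eq_restrictSupport]
    exact restrictSupport_mono ℂ (fun d hd => hd.1) hq
  have hy (d) (hd : d ∈ q.support) : Even (d 1) := (hq hd).2.2
  have hodd {k r : ℕ} (hr : r ∈ Finset.Icc 1 k) : Odd (2 * r - 1) :=
    Nat.Even.sub_odd (by have := (Finset.mem_Icc.mp hr).1; omega) (even_two_mul r) odd_one
  have hx_axis (r) (hr : r ∈ Finset.Icc 1 m) (y : ℂ) :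
      evalAt 0 y (((pderiv 0).toLinearMap ^ (2 * r - 1)) q) = 0 := by
    rw [evalAt_apply]
    exact eval_pderiv_pow_eq_zero_of_odd (i := 0) rfl (hodd hr) fun d hd => (hq hd).2.1
  have hy_axis (r) (hr : r ∈ Finset.Icc 1 l) (x : ℂ) :
      evalAt x 0 (((pderiv 1).toLinearMap ^ (2 * r - 1)) q) = 0 := by
    rw [evalAt_apply]
    exact eval_pderiv_pow_eq_zero_of_odd (i := 1) rfl (hodd hr) hy
  have hline : (∀ t : ℂ, t ^ (n - 1) * normalDerivOnLine ξ q = 0) ↔ normalDerivOnLine ξ q = 0 :=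
    ⟨fun h => by simpa using h 1, fun h t => by rw [h, mul_zero]⟩
  simp only [quasiC, Submodule.mem_inf, Submodule.mem_iInf, LinearMap.mem_ker,
    LinearMap.comp_apply, dirD_one_zero_s8, dirD_zero_one_s8, evalAt_dirD_line hhom,
    evalAt_dirD_reflect hy]
  exact ⟨fun h => hline.mp h.2, fun h => ⟨⟨⟨hx_axis, hy_axis⟩, hline.mpr h⟩, hline.mpr h⟩⟩

lemma normalDerivOnLine_X_pow (ξ : ℂ) (n : ℕ) : normalDerivOnLine ξ (X 0 ^ n) = ξ * n := by
  simp [normalDerivOnLine, dirD, evalAt_apply]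

theorem quasiC_even_even_dimension_general (m l : ℕ) (ξ : ℂ)
    (hξ : ξ ^ 2 = (2 * (l : ℂ) + 1) / (2 * (m : ℂ) + 1)) (n : ℕ) (hn : Even n) (hn0 : 0 < n) :
    Module.finrank ℂ
        ↥(MvPolynomial.homogeneousSubmodule (Fin 2) ℂ n ⊓ quasiC m l ξ ⊓
          suppOn {d | Even (d 0) ∧ Even (d 1)}) = n / 2 := by
  set S := {d : Fin 2 →₀ ℕ | d.degree = n ∧ Even (d 0) ∧ Even (d 1)}
  have hξ0 : ξ ≠ 0 := by
    rintro rfl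
    have hl : (2 * (l : ℂ) + 1) ≠ 0 := by exact_mod_cast Nat.succ_ne_zero (2 * l)
    have hm : (2 * (m : ℂ) + 1) ≠ 0 := by exact_mod_cast Nat.succ_ne_zero (2 * m)
    exact div_ne_zero hl hm (by simpa using hξ.symm)
  have hW : homogeneousSubmodule (Fin 2) ℂ n ⊓ quasiC m l ξ ⊓
      suppOn {d | Even (d 0) ∧ Even (d 1)} =
        restrictSupport ℂ S ⊓ LinearMap.ker (normalDerivOnLine ξ) := by
    rw [inf_right_comm, suppOn_eq_restrictSupport, homogeneousSubmodule_eq_restrictSupport,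
      ← restrictSupport_inter]
    ext q
    simp only [Submodule.mem_inf, LinearMap.mem_ker]
    exact and_congr_right mem_quasiC_iff
  have hX : X 0 ^ n ∈ restrictSupport ℂ S := by
    rw [X_pow_eq_monomial, monomial_mem_restrictSupport]
    left; simp [S, hn]
  have : Finite S := Nat.finite_of_card_ne_zero (by rw [card_even_exponents hn]; omega)
  have : FiniteDimensional ℂ (restrictSupport ℂ S) :=
    Module.Finite.of_basis (basisRestrictSupport ℂ S)
  have hdim := Submodule.finrank_inf_ker_add_one
    ⟨_, hX, by rw [normalDerivOnLine_X_pow]; exact mul_ne_zero hξ0 (by exact_mod_cast hn0.ne')⟩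
  rw [finrank_restrictSupport, card_even_exponents hn] at hdim
  rw [hW]
  omega

/-- The dimension of the space of homogeneous quasi-invariants of even degree `n > 0` for
`C₂(m,l)` that contain only even powers of `x` and of `y` equals `n/2`. -/
theorem quasiC_even_even_dimension (m l : ℕ) (hm : 1 ≤ m) (hl : 1 ≤ l) (ξ : ℂ)
    (hξ : ξ ^ 2 = (2 * (l : ℂ) + 1) / (2 * (m : ℂ) + 1)) (n : ℕ) (hn : Even n) (hn0 : 0 < n) :
    Module.finrank ℂ
        ↥(MvPolynomial.homogeneousSubmodule (Fin 2) ℂ n ⊓ quasiC m l ξ ⊓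
          suppOn {d | Even (d 0) ∧ Even (d 1)}) = n / 2 :=
  quasiC_even_even_dimension_general m l ξ hξ n hn hn0
end

section
/- For positive integers m, l and even n, the dimension of the space of homogeneous quasi-invariant polynomials of degree n for C₂(m,l) supported on odd powers of x (and hence odd powers of y) is 0 if n < 2(m+l+1), is 1 if n = 2(m+l+1), and is n/2 - m - l - 1 if n > 2(m+l+1). -/
open MvPolynomial

/-!
A homogeneous polynomial of even degree `n` with odd powers of `x` is `∑ aᵢ xⁱ yⁿ⁻ⁱ` over odd
`i`. The conditions on `x = 0` kill exactly the coefficients with `i < 2m + 1`, those on `y = 0`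
the ones with `n - i < 2l + 1`, and, the polynomial being odd in both variables, the two lines
`ξx ± y = 0` impose one and the same linear condition `∑ aᵢ ξⁿ⁻ⁱ⁻¹ ((n - i) - ξ² i) = 0`. So the
space is the kernel of a linear functional on `ℂ^(n/2 - m - l)`. As `1 + ξ² ≠ 0`, at most one of
its coefficients `(n - i) - ξ² i` vanishes; the functional is zero only for `n = 2(m + l + 1)`,
where the single admissible index is `i = 2m + 1` and `(n - i) - ξ² i = 0`.
-/

open Finset

namespace QuasiC

noncomputable def xyExp (i j : ℕ) : Fin 2 →₀ ℕ := Finsupp.single 0 i + Finsupp.single 1 j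

@[simp] lemma xyExp_apply_zero (i j : ℕ) : xyExp i j 0 = i := by simp [xyExp]

@[simp] lemma xyExp_apply_one (i j : ℕ) : xyExp i j 1 = j := by simp [xyExp]

lemma xyExp_self (d : Fin 2 →₀ ℕ) : xyExp (d 0) (d 1) = d := by
  ext a; fin_cases a <;> simp

lemma degree_xyExp (i j : ℕ) : (xyExp i j).degree = i + j := by
  simp [xyExp]

lemma xyExp_sub_single_zero (i j : ℕ) : xyExp i j - Finsupp.single 0 1 = xyExp (i - 1) j := by
  ext a; fin_cases a <;> simp [xyExp]

lemma xyExp_sub_single_one (i j : ℕ) : xyExp i j - Finsupp.single 1 1 = xyExp i (j - 1) := by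
  ext a; fin_cases a <;> simp [xyExp]

lemma pderiv_zero_monomial_xyExp (i j : ℕ) (c : ℂ) :
    pderiv 0 (monomial (xyExp i j) c) = monomial (xyExp (i - 1) j) (c * i) := by
  rw [pderiv_monomial, xyExp_apply_zero, xyExp_sub_single_zero]

lemma pderiv_one_monomial_xyExp (i j : ℕ) (c : ℂ) :
    pderiv 1 (monomial (xyExp i j) c) = monomial (xyExp i (j - 1)) (c * j) := by
  rw [pderiv_monomial, xyExp_apply_one, xyExp_sub_single_one]

lemma evalAt_monomial_xyExp (x y : ℂ) (i j : ℕ) (c : ℂ) :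
    evalAt x y (monomial (xyExp i j) c) = c * x ^ i * y ^ j := by
  simp [evalAt, aeval_monomial, xyExp, Finsupp.prod_add_index, pow_add, mul_assoc]

lemma dirD_monomial_xyExp (a b : ℂ) (i j : ℕ) (c : ℂ) :
    dirD a b (monomial (xyExp i j) c) =
      monomial (xyExp (i - 1) j) (a * (c * i)) + monomial (xyExp i (j - 1)) (b * (c * j)) := by
  simp only [dirD, LinearMap.add_apply, LinearMap.smul_apply, Derivation.coeFn_coe,
    pderiv_zero_monomial_xyExp, pderiv_one_monomial_xyExp, smul_monomial, smul_eq_mul]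

lemma dirD_one_zero_pow_monomial_xyExp (k i j : ℕ) (c : ℂ) :
    (dirD 1 0 ^ k) (monomial (xyExp i j) c) =
      monomial (xyExp (i - k) j) (c * i.descFactorial k) := by
  induction k with
  | zero => simp
  | succ k ih =>
    rw [pow_succ', Module.End.mul_apply, ih, dirD_monomial_xyExp, Nat.descFactorial_succ]
    simp only [zero_mul, monomial_zero, add_zero, Nat.sub_sub]
    push_cast
    ring_nf

lemma dirD_zero_one_pow_monomial_xyExp (k i j : ℕ) (c : ℂ) :
    (dirD 0 1 ^ k) (monomial (xyExp i j) c) =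
      monomial (xyExp i (j - k)) (c * j.descFactorial k) := by
  induction k with
  | zero => simp
  | succ k ih =>
    rw [pow_succ', Module.End.mul_apply, ih, dirD_monomial_xyExp, Nat.descFactorial_succ]
    simp only [zero_mul, monomial_zero, zero_add, Nat.sub_sub]
    push_cast
    ring_nf

lemma evalAt_zero_dirD_pow_monomial_xyExp (y : ℂ) (k i j : ℕ) (c : ℂ) :
    evalAt 0 y ((dirD 1 0 ^ k) (monomial (xyExp i j) c)) =
      if i = k then c * k.factorial * y ^ j else 0 := by
  rw [dirD_one_zero_pow_monomial_xyExp, evalAt_monomial_xyExp]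
  rcases lt_trichotomy i k with h | rfl | h
  · simp [Nat.descFactorial_eq_zero_iff_lt.mpr h, h.ne]
  · simp [Nat.descFactorial_self]
  · simp [zero_pow (Nat.sub_ne_zero_of_lt h), h.ne']

lemma evalAt_dirD_pow_zero_monomial_xyExp (x : ℂ) (k i j : ℕ) (c : ℂ) :
    evalAt x 0 ((dirD 0 1 ^ k) (monomial (xyExp i j) c)) =
      if j = k then c * k.factorial * x ^ i else 0 := by
  rw [dirD_zero_one_pow_monomial_xyExp, evalAt_monomial_xyExp]
  rcases lt_trichotomy j k with h | rfl | h
  · simp [Nat.descFactorial_eq_zero_iff_lt.mpr h, h.ne]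
  · simp [Nat.descFactorial_self]
  · simp [zero_pow (Nat.sub_ne_zero_of_lt h), h.ne']

lemma mem_quasiC {m l : ℕ} {ξ : ℂ} {q : MvPolynomial (Fin 2) ℂ} : q ∈ quasiC m l ξ ↔
    (∀ r ∈ Icc 1 m, ∀ y : ℂ, evalAt 0 y ((dirD 1 0 ^ (2 * r - 1)) q) = 0) ∧
    (∀ r ∈ Icc 1 l, ∀ x : ℂ, evalAt x 0 ((dirD 0 1 ^ (2 * r - 1)) q) = 0) ∧
    (∀ t : ℂ, evalAt t (-(ξ * t)) (dirD ξ 1 q) = 0) ∧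
    (∀ t : ℂ, evalAt t (ξ * t) (dirD ξ (-1) q) = 0) := by
  simp [quasiC, Submodule.mem_inf, Submodule.mem_iInf, LinearMap.mem_ker, and_assoc]

def lineCoeff (ξ : ℂ) (i j : ℕ) : ℂ := ξ ^ (j - 1) * (j - ξ ^ 2 * i)

lemma evalAt_dirD_monomial_xyExp_of_odd (ξ t : ℂ) {i j : ℕ} (hj : Odd j) (c : ℂ) :
    evalAt t (-(ξ * t)) (dirD ξ 1 (monomial (xyExp i j) c)) =
      c * t ^ (i + j - 1) * lineCoeff ξ i j := by
  obtain ⟨k, rfl⟩ := hj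
  rw [dirD_monomial_xyExp, map_add, evalAt_monomial_xyExp, evalAt_monomial_xyExp, lineCoeff,
    Nat.add_sub_cancel, Even.neg_pow ⟨k, two_mul k⟩, Odd.neg_pow ⟨k, rfl⟩]
  rcases i with _ | i
  · rw [zero_add, Nat.add_sub_cancel]
    push_cast
    ring
  · simp only [Nat.add_sub_cancel, show i + 1 + (2 * k + 1) - 1 = i + 1 + 2 * k by omega]
    push_cast
    ring

lemma evalAt_dirD_neg_monomial_xyExp (ξ t : ℂ) {i j : ℕ} (hj : 1 ≤ j) (c : ℂ) :
    evalAt t (ξ * t) (dirD ξ (-1) (monomial (xyExp i j) c)) =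
      -(c * t ^ (i + j - 1) * lineCoeff ξ i j) := by
  obtain ⟨j, rfl⟩ := Nat.exists_eq_add_of_le' hj
  rw [dirD_monomial_xyExp, map_add, evalAt_monomial_xyExp, evalAt_monomial_xyExp, lineCoeff,
    Nat.add_sub_cancel]
  rcases i with _ | i
  · rw [zero_add, Nat.add_sub_cancel]
    push_cast
    ring
  · simp only [Nat.add_sub_cancel, show i + 1 + (j + 1) - 1 = i + 1 + j by omega]
    push_cast
    ring

lemma lineCoeff_eq_zero_iff {ξ : ℂ} (hξ : ξ ≠ 0) {i j : ℕ} :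
    lineCoeff ξ i j = 0 ↔ (j : ℂ) = ξ ^ 2 * i := by
  simp [lineCoeff, hξ, sub_eq_zero]

lemma lineCoeff_ne_zero_or {ξ : ℂ} (hξ : ξ ≠ 0) (hξ' : ξ ^ 2 ≠ -1) (i j : ℕ) :
    lineCoeff ξ i (j + 2) ≠ 0 ∨ lineCoeff ξ (i + 2) j ≠ 0 := by
  by_contra! h
  rw [lineCoeff_eq_zero_iff hξ, lineCoeff_eq_zero_iff hξ] at h
  push_cast at h
  exact hξ' (by linear_combination (h.1 - h.2) / 2)

lemma ne_zero_and_sq_ne_neg_one {m l : ℕ} {ξ : ℂ} (hξ : (2 * l + 1 : ℂ) = ξ ^ 2 * (2 * m + 1)) :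
    ξ ≠ 0 ∧ ξ ^ 2 ≠ -1 := by
  constructor
  · rintro rfl
    norm_num at hξ
    norm_cast at hξ
  · intro h
    have : ((2 * m + 2 * l + 2 : ℕ) : ℂ) = 0 := by
      push_cast
      linear_combination hξ + (2 * m + 1 : ℂ) * h
    norm_cast at this

noncomputable def monomialsOn (n : ℕ) (s : Finset ℕ) : (s → ℂ) →ₗ[ℂ] MvPolynomial (Fin 2) ℂ :=
  Fintype.linearCombination ℂ fun i : s => monomial (xyExp i (n - i)) 1

noncomputable def lineFunctional (ξ : ℂ) (n : ℕ) (s : Finset ℕ) : Module.Dual ℂ (s → ℂ) :=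
  Fintype.linearCombination ℂ fun i : s => lineCoeff ξ i (n - i)

lemma lineFunctional_apply_single (ξ : ℂ) (n : ℕ) {s : Finset ℕ} (i : s) :
    lineFunctional ξ n s (Pi.single i 1) = lineCoeff ξ i (n - i) := by
  rw [lineFunctional, Fintype.linearCombination_apply_single, one_smul]

lemma monomialsOn_apply (n : ℕ) (s : Finset ℕ) (a : s → ℂ) :
    monomialsOn n s a = ∑ i : s, monomial (xyExp i (n - i)) (a i) := by
  simp [monomialsOn, Fintype.linearCombination_apply, smul_monomial]

lemma monomialsOn_injective (n : ℕ) (s : Finset ℕ) : Function.Injective (monomialsOn n s) := by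
  have hinj : Function.Injective fun i : s => xyExp i (n - i) := fun i i' h =>
    Subtype.ext (by simpa using congr($h 0))
  have := (basisMonomials (Fin 2) ℂ).linearIndependent.comp _ hinj
  rw [coe_basisMonomials] at this
  exact this.fintypeLinearCombination_injective

lemma evalAt_dirD_monomialsOn {n : ℕ} {s : Finset ℕ} (hs : ∀ i ∈ s, Odd (n - i)) (ξ t : ℂ)
    (a : s → ℂ) :
    evalAt t (-(ξ * t)) (dirD ξ 1 (monomialsOn n s a)) = t ^ (n - 1) * lineFunctional ξ n s a := by
  rw [monomialsOn_apply, map_sum, map_sum, lineFunctional, Fintype.linearCombination_apply,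
    mul_sum]
  refine sum_congr rfl fun i _ => ?_
  have hi := hs i i.2
  rw [evalAt_dirD_monomial_xyExp_of_odd _ _ hi, smul_eq_mul,
    Nat.add_sub_of_le (Nat.sub_pos_iff_lt.mp hi.pos).le]
  ring

lemma evalAt_dirD_neg_monomialsOn {n : ℕ} {s : Finset ℕ} (hs : ∀ i ∈ s, i < n) (ξ t : ℂ)
    (a : s → ℂ) :
    evalAt t (ξ * t) (dirD ξ (-1) (monomialsOn n s a)) =
      -(t ^ (n - 1) * lineFunctional ξ n s a) := by
  rw [monomialsOn_apply, map_sum, map_sum, lineFunctional, Fintype.linearCombination_apply,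
    mul_sum, ← sum_neg_distrib]
  refine sum_congr rfl fun i _ => ?_
  have hi := hs i i.2
  rw [evalAt_dirD_neg_monomial_xyExp _ _ (by omega), smul_eq_mul, Nat.add_sub_of_le hi.le]
  ring

lemma evalAt_zero_dirD_pow_monomialsOn {n k : ℕ} {s : Finset ℕ} (hk : k ∉ s) (y : ℂ)
    (a : s → ℂ) : evalAt 0 y ((dirD 1 0 ^ k) (monomialsOn n s a)) = 0 := by
  rw [monomialsOn_apply, map_sum, map_sum]
  refine sum_eq_zero fun i _ => ?_
  rw [evalAt_zero_dirD_pow_monomial_xyExp, if_neg (ne_of_mem_of_not_mem i.2 hk)]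

lemma evalAt_dirD_pow_zero_monomialsOn {n k : ℕ} {s : Finset ℕ} (hk : ∀ i ∈ s, n - i ≠ k)
    (x : ℂ) (a : s → ℂ) : evalAt x 0 ((dirD 0 1 ^ k) (monomialsOn n s a)) = 0 := by
  rw [monomialsOn_apply, map_sum, map_sum]
  refine sum_eq_zero fun i _ => ?_
  rw [evalAt_dirD_pow_zero_monomial_xyExp, if_neg (hk i i.2)]

lemma monomialsOn_mem_homogeneousSubmodule {n : ℕ} {s : Finset ℕ} (hs : ∀ i ∈ s, i ≤ n)
    (a : s → ℂ) : monomialsOn n s a ∈ homogeneousSubmodule (Fin 2) ℂ n := by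
  rw [monomialsOn_apply]
  refine Submodule.sum_mem _ fun i _ => isHomogeneous_monomial _ ?_
  rw [degree_xyExp, Nat.add_sub_of_le (hs i i.2)]

lemma monomialsOn_mem_suppOn {n : ℕ} {s : Finset ℕ} (hs : ∀ i ∈ s, Odd i) (a : s → ℂ) :
    monomialsOn n s a ∈ suppOn {d | Odd (d 0)} := by
  intro d hd
  rw [monomialsOn_apply, coeff_sum]
  refine sum_eq_zero fun i _ => ?_
  rw [coeff_monomial, if_neg]
  rintro rfl
  exact hd (by simpa using hs i i.2)

lemma sum_monomial_xyExp_of_isHomogeneous {n : ℕ} {q : MvPolynomial (Fin 2) ℂ}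
    (hq : q.IsHomogeneous n) :
    ∑ i ∈ range (n + 1), monomial (xyExp i (n - i)) (coeff (xyExp i (n - i)) q) = q := by
  ext d
  rw [coeff_sum]
  by_cases hd : d 0 + d 1 = n
  · have hd' : xyExp (d 0) (n - d 0) = d := by
      rw [← hd, Nat.add_sub_cancel_left, xyExp_self]
    rw [sum_eq_single_of_mem (d 0) (mem_range.mpr (by omega)), coeff_monomial, if_pos hd', hd']
    intro i _ hi
    rw [coeff_monomial, if_neg]
    rintro rfl
    exact hi (by simp)
  · rw [hq.coeff_eq_zero (by rwa [← xyExp_self d, degree_xyExp])]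
    refine sum_eq_zero fun i hi => ?_
    rw [coeff_monomial, if_neg]
    rintro rfl
    exact hd (by rw [xyExp_apply_zero, xyExp_apply_one]; have := mem_range.mp hi; omega)

lemma evalAt_zero_one_dirD_pow_of_isHomogeneous {n k : ℕ} {q : MvPolynomial (Fin 2) ℂ}
    (hq : q.IsHomogeneous n) (hk : k ≤ n) :
    evalAt 0 1 ((dirD 1 0 ^ k) q) = coeff (xyExp k (n - k)) q * k.factorial := by
  conv_lhs => rw [← sum_monomial_xyExp_of_isHomogeneous hq]
  simp only [map_sum, evalAt_zero_dirD_pow_monomial_xyExp, one_pow, mul_one]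
  rw [sum_ite_eq' _ _ (fun i => coeff (xyExp i (n - i)) q * k.factorial),
    if_pos (mem_range.mpr (by omega))]

lemma evalAt_one_zero_dirD_pow_of_isHomogeneous {n k : ℕ} {q : MvPolynomial (Fin 2) ℂ}
    (hq : q.IsHomogeneous n) (hk : k ≤ n) :
    evalAt 1 0 ((dirD 0 1 ^ k) q) = coeff (xyExp (n - k) k) q * k.factorial := by
  conv_lhs => rw [← sum_monomial_xyExp_of_isHomogeneous hq]
  simp only [map_sum, evalAt_dirD_pow_zero_monomial_xyExp, one_pow, mul_one]
  rw [sum_eq_single_of_mem (n - k) (mem_range.mpr (by omega)), if_pos (by omega),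
    Nat.sub_sub_self hk]
  intro i hi hik
  rw [if_neg (by have := mem_range.mp hi; omega)]

def admissible (m l n : ℕ) : Finset ℕ :=
  (range (n + 1)).filter fun i => Odd i ∧ 2 * m + 1 ≤ i ∧ i + 2 * l + 1 ≤ n

section Admissible

variable {m l n : ℕ}

lemma mem_admissible {i : ℕ} :
    i ∈ admissible m l n ↔ Odd i ∧ 2 * m + 1 ≤ i ∧ i + 2 * l + 1 ≤ n := by
  simp only [admissible, mem_filter, mem_range, and_iff_right_iff_imp]
  omega

lemma card_admissible (hn : Even n) : (admissible m l n).card = n / 2 - m - l := by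
  obtain ⟨k, rfl⟩ := hn
  have : admissible m l (k + k) = (range (k - m - l)).image fun j => 2 * (m + j) + 1 := by
    ext i
    simp only [mem_admissible, mem_image, mem_range]
    constructor
    · rintro ⟨⟨j, rfl⟩, h₁, h₂⟩
      exact ⟨j - m, by omega, by omega⟩
    · rintro ⟨j, hj, rfl⟩
      exact ⟨⟨m + j, rfl⟩, by omega, by omega⟩
  have hinj : Function.Injective fun j => 2 * (m + j) + 1 := fun j j' h => by
    simp only at h; omega
  rw [this, card_image_of_injective _ hinj, card_range]
  omega

variable {ξ : ℂ} {q : MvPolynomial (Fin 2) ℂ}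

lemma coeff_xyExp_eq_zero_of_notMem_admissible (hn : Even n)
    (hq : q ∈ homogeneousSubmodule (Fin 2) ℂ n ⊓ quasiC m l ξ ⊓ suppOn {d | Odd (d 0)})
    {i : ℕ} (hin : i ≤ n) (hi : i ∉ admissible m l n) : coeff (xyExp i (n - i)) q = 0 := by
  obtain ⟨⟨hhom, hquasi⟩, hsupp⟩ := Submodule.mem_inf.mp hq |>.imp_left Submodule.mem_inf.mp
  obtain ⟨hx, hy, -, -⟩ := mem_quasiC.mp hquasi
  rw [mem_homogeneousSubmodule] at hhom
  by_cases hodd : Odd i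
  swap
  · exact hsupp _ (by simpa using hodd)
  obtain ⟨k, rfl⟩ := hodd
  obtain ⟨n, rfl⟩ := hn
  rw [mem_admissible, not_and, not_and_or, not_le, not_le] at hi
  rcases hi ⟨k, rfl⟩ with hlow | hhigh
  · have h := hx (k + 1) (mem_Icc.mpr ⟨by omega, by omega⟩) 1
    rw [show 2 * (k + 1) - 1 = 2 * k + 1 by omega,
      evalAt_zero_one_dirD_pow_of_isHomogeneous hhom hin] at h
    exact (mul_eq_zero.mp h).resolve_right (Nat.cast_ne_zero.mpr (Nat.factorial_ne_zero _))
  · have h := hy (n - k) (mem_Icc.mpr ⟨by omega, by omega⟩) 1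
    rw [show 2 * (n - k) - 1 = n + n - (2 * k + 1) by omega,
      evalAt_one_zero_dirD_pow_of_isHomogeneous hhom (Nat.sub_le _ _),
      Nat.sub_sub_self hin] at h
    exact (mul_eq_zero.mp h).resolve_right (Nat.cast_ne_zero.mpr (Nat.factorial_ne_zero _))

lemma monomialsOn_coeff_eq_self (hn : Even n)
    (hq : q ∈ homogeneousSubmodule (Fin 2) ℂ n ⊓ quasiC m l ξ ⊓ suppOn {d | Odd (d 0)}) :
    monomialsOn n (admissible m l n) (fun i => coeff (xyExp i (n - i)) q) = q := by
  have hhom : q.IsHomogeneous n := (mem_homogeneousSubmodule _ _).mp hq.1.1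
  rw [monomialsOn_apply, sum_coe_sort (admissible m l n)
    (fun i => monomial (xyExp i (n - i)) (coeff (xyExp i (n - i)) q))]
  conv_rhs => rw [← sum_monomial_xyExp_of_isHomogeneous hhom]
  refine sum_subset (fun i hi => mem_range.mpr (by have := mem_admissible.mp hi; omega))
    fun i hi hI => ?_
  rw [coeff_xyExp_eq_zero_of_notMem_admissible hn hq (Nat.lt_succ_iff.mp (mem_range.mp hi)) hI,
    monomial_zero]

lemma odd_sub_of_mem_admissible (hn : Even n) {i : ℕ} (hi : i ∈ admissible m l n) :
    Odd (n - i) :=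
  have hi := mem_admissible.mp hi
  Nat.Even.sub_odd (by omega) hn hi.1

lemma map_ker_lineFunctional_le (hn : Even n) :
    (LinearMap.ker (lineFunctional ξ n (admissible m l n))).map (monomialsOn n (admissible m l n))
      ≤ homogeneousSubmodule (Fin 2) ℂ n ⊓ quasiC m l ξ ⊓ suppOn {d | Odd (d 0)} := by
  rintro _ ⟨a, ha, rfl⟩
  have ha : lineFunctional ξ n (admissible m l n) a = 0 := ha
  refine ⟨⟨monomialsOn_mem_homogeneousSubmodule (fun i hi => ?_) a,
    mem_quasiC.mpr ⟨fun r hr y => ?_, fun r hr x => ?_, fun t => ?_, fun t => ?_⟩⟩,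
    monomialsOn_mem_suppOn (fun i hi => (mem_admissible.mp hi).1) a⟩
  · have := mem_admissible.mp hi; omega
  · refine evalAt_zero_dirD_pow_monomialsOn (fun h => ?_) y a
    have := mem_admissible.mp h; have := mem_Icc.mp hr; omega
  · refine evalAt_dirD_pow_zero_monomialsOn (fun i hi => ?_) x a
    have := mem_admissible.mp hi; have := mem_Icc.mp hr; omega
  · rw [evalAt_dirD_monomialsOn (fun i => odd_sub_of_mem_admissible hn), ha, mul_zero]
  · rw [evalAt_dirD_neg_monomialsOn (fun i hi => by have := mem_admissible.mp hi; omega), ha,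
      mul_zero, neg_zero]

lemma le_map_ker_lineFunctional (hn : Even n) :
    homogeneousSubmodule (Fin 2) ℂ n ⊓ quasiC m l ξ ⊓ suppOn {d | Odd (d 0)} ≤
      (LinearMap.ker (lineFunctional ξ n (admissible m l n))).map
        (monomialsOn n (admissible m l n)) := by
  intro q hq
  refine ⟨fun i => coeff (xyExp i (n - i)) q, LinearMap.mem_ker.mpr ?_,
    monomialsOn_coeff_eq_self hn hq⟩
  have h := (mem_quasiC.mp hq.1.2).2.2.1 1
  rwa [← monomialsOn_coeff_eq_self hn hq,
    evalAt_dirD_monomialsOn (fun i => odd_sub_of_mem_admissible hn), one_pow, one_mul] at h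

lemma finrank_homogeneous_inf_quasiC_inf_suppOn (hn : Even n) :
    Module.finrank ℂ ↥(homogeneousSubmodule (Fin 2) ℂ n ⊓ quasiC m l ξ ⊓ suppOn {d | Odd (d 0)}) =
      Module.finrank ℂ (LinearMap.ker (lineFunctional ξ n (admissible m l n))) := by
  rw [le_antisymm (le_map_ker_lineFunctional hn) (map_ker_lineFunctional_le hn)]
  exact (Submodule.equivMapOfInjective _ (monomialsOn_injective _ _) _).finrank_eq.symm

lemma lineFunctional_admissible_eq_zero (hξ : (2 * l + 1 : ℂ) = ξ ^ 2 * (2 * m + 1)) :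
    lineFunctional ξ (2 * (m + l + 1)) (admissible m l (2 * (m + l + 1))) = 0 := by
  refine LinearMap.ext fun a => ?_
  rw [lineFunctional, Fintype.linearCombination_apply, LinearMap.zero_apply]
  refine sum_eq_zero fun ⟨i, hi⟩ _ => ?_
  obtain ⟨⟨k, rfl⟩, h₁, h₂⟩ := mem_admissible.mp hi
  obtain rfl : k = m := by omega
  change a _ • lineCoeff ξ (2 * k + 1) (2 * (k + l + 1) - (2 * k + 1)) = 0
  rw [show 2 * (k + l + 1) - (2 * k + 1) = 2 * l + 1 by omega, lineCoeff]
  push_cast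
  rw [hξ, sub_self, mul_zero, smul_zero]

lemma lineFunctional_admissible_ne_zero (hξ : ξ ≠ 0) (hξ' : ξ ^ 2 ≠ -1) (hn : Even n)
    (hlt : 2 * (m + l + 1) < n) : lineFunctional ξ n (admissible m l n) ≠ 0 := by
  obtain ⟨k, rfl⟩ := hn
  intro hf
  have coeff_eq (i : admissible m l (k + k)) : lineCoeff ξ i (k + k - i) = 0 := by
    rw [← lineFunctional_apply_single, hf, LinearMap.zero_apply]
  rcases lineCoeff_ne_zero_or hξ hξ' (2 * m + 1) (k + k - (2 * m + 3)) with h | h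
  · rw [show k + k - (2 * m + 3) + 2 = k + k - (2 * m + 1) by omega] at h
    exact h (coeff_eq ⟨_, mem_admissible.mpr ⟨odd_two_mul_add_one m, le_rfl, by omega⟩⟩)
  · exact h (coeff_eq ⟨_, mem_admissible.mpr ⟨⟨m + 1, by ring⟩, by omega, by omega⟩⟩)

end Admissible

end QuasiC

open QuasiC

theorem quasiC_even_odd_dimension_general (m l : ℕ) (ξ : ℂ)
    (hξ : ξ ^ 2 = (2 * (l : ℂ) + 1) / (2 * (m : ℂ) + 1)) (n : ℕ) (hn : Even n) :
    Module.finrank ℂ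
        ↥(MvPolynomial.homogeneousSubmodule (Fin 2) ℂ n ⊓ quasiC m l ξ ⊓
          suppOn {d | Odd (d 0)}) =
      if n < 2 * (m + l + 1) then 0
      else if n = 2 * (m + l + 1) then 1
      else n / 2 - m - l - 1 := by
  have hξ₁ : (2 * l + 1 : ℂ) = ξ ^ 2 * (2 * m + 1) := by
    rw [hξ, div_mul_cancel₀ _ (by norm_cast)]
  obtain ⟨hξ₀, hξ₂⟩ := ne_zero_and_sq_ne_neg_one hξ₁
  have hdim : Module.finrank ℂ (admissible m l n → ℂ) = n / 2 - m - l := by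
    rw [Module.finrank_fintype_fun_eq_card, Fintype.card_coe, card_admissible hn]
  rw [finrank_homogeneous_inf_quasiC_inf_suppOn hn]
  rcases lt_trichotomy n (2 * (m + l + 1)) with hlt | rfl | hgt
  · have := Submodule.finrank_le (LinearMap.ker (lineFunctional ξ n (admissible m l n)))
    rw [if_pos hlt]
    omega
  · rw [lineFunctional_admissible_eq_zero hξ₁, LinearMap.ker_zero, finrank_top, hdim,
      if_neg (lt_irrefl _), if_pos rfl]
    omega
  · have := Module.Dual.finrank_ker_add_one_of_ne_zero
      (lineFunctional_admissible_ne_zero hξ₀ hξ₂ hn hgt)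
    rw [if_neg (by omega), if_neg (by omega)]
    omega

/-- For even `n`, the dimension of the space of homogeneous quasi-invariants of degree `n` for
`C₂(m,l)` supported on odd powers of `x` is `0` if `n < 2(m+l+1)`, is `1` if `n = 2(m+l+1)`,
and is `n/2 - m - l - 1` if `n > 2(m+l+1)`. -/
theorem quasiC_even_odd_dimension (m l : ℕ) (hm : 1 ≤ m) (hl : 1 ≤ l) (ξ : ℂ)
    (hξ : ξ ^ 2 = (2 * (l : ℂ) + 1) / (2 * (m : ℂ) + 1)) (n : ℕ) (hn : Even n) :
    Module.finrank ℂ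
        ↥(MvPolynomial.homogeneousSubmodule (Fin 2) ℂ n ⊓ quasiC m l ξ ⊓
          suppOn {d | Odd (d 0)}) =
      if n < 2 * (m + l + 1) then 0
      else if n = 2 * (m + l + 1) then 1
      else n / 2 - m - l - 1 :=
  quasiC_even_odd_dimension_general m l ξ hξ n hn
end

section
/- For A_n(m) with m a positive integer (hence outside the exceptional set), the quotient ℂ[x₁,...,x_{n+1}]/(p₁,...,p_{n+1}) is finite-dimensional, where pₛ = x₁^s + ... + xₙ^s + m^{(s−2)/2} x_{n+1}^s; equivalently, the radical of the ideal (p₁,...,p_{n+1}) is the maximal ideal (x₁,...,x_{n+1}). -/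
/-!
With `v = (x₁, ..., xₙ, σ x_{n+1})` and weights `(m, ..., m, 1)`, `m · p_s(x)` is the weighted
power sum `∑ cᵢ vᵢ^s`. Weighted power sums `s = 1, ..., n+1` with positive weights vanish only at
`v = 0` (pair them against `t ∏ (t - v_j)`, the product over the `v_j ≠ vᵢ`), so the zero locus of
the ideal is the origin. The Nullstellensatz then identifies the radical with `(x₁, ..., x_{n+1})`,
and the quotient, generated by nilpotent elements, is integral and of finite type, hence finite.
-/

open MvPolynomial

/-- The deformed Newton sum `p_s = x₁^s + ... + xₙ^s + m^{(s-2)/2} x_{n+1}^s` over `ℂ`, written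
with a square root `σ` of `m` as `m^{(s-2)/2} = σ^s/m`. -/
noncomputable def deformedNewtonSumC (n m : ℕ) (σ : ℂ) (s : ℕ) :
    MvPolynomial (Fin (n + 1)) ℂ :=
  (∑ i : Fin n, X i.castSucc ^ s) + C (σ ^ s / (m : ℂ)) * X (Fin.last n) ^ s

theorem eq_zero_of_forall_sum_mul_pow_eq_zero {R ι : Type*} [CommRing R] [IsDomain R]
    [CharZero R] [Fintype ι] (c : ι → ℕ) (hc : ∀ i, c i ≠ 0) (v : ι → R)
    (h : ∀ s ∈ Finset.Icc 1 (Fintype.card ι), ∑ i, (c i : R) * v i ^ s = 0) : v = 0 := by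
  classical
  funext i
  by_contra hvi
  set J := Finset.univ.filter fun j => v j ≠ v i
  set P : Polynomial R := Polynomial.X * ∏ j ∈ J, (Polynomial.X - Polynomial.C (v j)) with hP
  have hdeg : P.natDegree < Fintype.card ι + 1 := by
    have hJ : J.card < Fintype.card ι :=
      Finset.card_lt_card (Finset.filter_ssubset.mpr ⟨i, Finset.mem_univ i, by simp⟩)
    calc P.natDegree ≤ 1 + J.card := Polynomial.natDegree_mul_le.trans (by simp)
      _ < Fintype.card ι + 1 := by omega
  have hsum : ∑ j, (c j : R) * P.eval (v j) = 0 := by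
    simp only [Polynomial.eval_eq_sum_range' hdeg, Finset.mul_sum]
    rw [Finset.sum_comm, Finset.sum_range_succ', hP, Polynomial.coeff_X_mul_zero, ← hP]
    simp only [zero_mul, mul_zero, Finset.sum_const_zero, add_zero]
    refine Finset.sum_eq_zero fun s hs => ?_
    have := h (s + 1) (Finset.mem_Icc.mpr ⟨s.succ_pos, Finset.mem_range.mp hs⟩)
    simp only [mul_left_comm _ (P.coeff _), ← Finset.mul_sum, this, mul_zero]
  have hfiber : ∑ j, (c j : R) * P.eval (v j) =
      (∑ j ∈ Finset.univ.filter fun j => v j = v i, (c j : R)) * P.eval (v i) := by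
    rw [Finset.sum_mul, Finset.sum_filter]
    refine Finset.sum_congr rfl fun j _ => ?_
    split_ifs with hj
    · rw [hj]
    · simp only [hP, Polynomial.eval_mul, Polynomial.eval_prod]
      exact mul_eq_zero_of_right _ (mul_eq_zero_of_right _
        (Finset.prod_eq_zero (i := j) (by simp [J, hj]) (by simp)))
  have hPi : P.eval (v i) ≠ 0 := by
    simp only [hP, Polynomial.eval_mul, Polynomial.eval_X, Polynomial.eval_prod,
      Polynomial.eval_sub, Polynomial.eval_C]
    exact mul_ne_zero hvi (Finset.prod_ne_zero_iff.mpr fun j hj =>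
      sub_ne_zero.mpr (Finset.mem_filter.mp hj).2.symm)
  have hweight : (∑ j ∈ Finset.univ.filter fun j => v j = v i, (c j : R)) ≠ 0 := by
    rw [← Nat.cast_sum, Nat.cast_ne_zero]
    exact (Finset.sum_pos' (fun _ _ => Nat.zero_le _)
      ⟨i, by simp, Nat.pos_of_ne_zero (hc i)⟩).ne'
  exact mul_ne_zero hweight hPi (hfiber ▸ hsum)

theorem IsNilpotent.isIntegral {R B : Type*} [CommRing R] [Ring B] [Algebra R B] {x : B}
    (hx : IsNilpotent x) : IsIntegral R x := by
  obtain ⟨k, hk⟩ := hx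
  exact IsIntegral.of_pow k.succ_pos (by rw [_root_.pow_succ, hk, zero_mul]; exact isIntegral_zero)

namespace MvPolynomial

theorem finite_quotient_of_forall_X_mem_radical {R σ : Type*} [CommRing R] [Finite σ]
    (I : Ideal (MvPolynomial σ R)) (h : ∀ i, X i ∈ I.radical) :
    Module.Finite R (MvPolynomial σ R ⧸ I) := by
  have : Algebra.IsIntegral R (MvPolynomial σ R ⧸ I) := by
    refine ⟨fun q => ?_⟩
    obtain ⟨p, rfl⟩ := Ideal.Quotient.mk_surjective q
    induction p using MvPolynomial.induction_on with
    | C a => exact isIntegral_algebraMap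
    | add p q hp hq => exact map_add (Ideal.Quotient.mk I) p q ▸ hp.add hq
    | mul_X p i hp =>
      obtain ⟨k, hk⟩ := h i
      have hXi : IsNilpotent (Ideal.Quotient.mk I (X i)) :=
        ⟨k, by rw [← map_pow, Ideal.Quotient.eq_zero_iff_mem]; exact hk⟩
      exact map_mul (Ideal.Quotient.mk I) p (X i) ▸ hp.mul hXi.isIntegral
  exact Algebra.IsIntegral.finite

theorem vanishingIdeal_singleton_zero {K σ : Type*} [Field K] :
    vanishingIdeal K {(0 : σ → K)} = Ideal.span (Set.range (X : σ → MvPolynomial σ K)) := by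
  ext p
  rw [mem_vanishingIdeal_singleton_iff, aeval_zero, ← Set.image_univ, mem_ideal_span_X_image]
  simp only [Set.mem_univ, true_and, Algebra.algebraMap_self, RingHom.id_apply,
    constantCoeff_eq, ← notMem_support_iff]
  exact ⟨fun h0 d hd => Finsupp.ne_iff.mp (ne_of_mem_of_not_mem hd h0),
    fun h hd => (h 0 hd).elim fun _ hi => hi rfl⟩

theorem radical_eq_span_range_X_of_zeroLocus_eq_singleton_zero {K σ : Type*}
    [Field K] [IsAlgClosed K] [Finite σ] {I : Ideal (MvPolynomial σ K)}
    (h : zeroLocus K I = {0}) : I.radical = Ideal.span (Set.range X) := by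
  rw [← vanishingIdeal_zeroLocus_eq_radical (K := K), h, vanishingIdeal_singleton_zero]

end MvPolynomial

theorem mul_aeval_deformedNewtonSumC {n m : ℕ} (hm : m ≠ 0) (σ : ℂ) (s : ℕ)
    (x : Fin (n + 1) → ℂ) :
    (m : ℂ) * aeval x (deformedNewtonSumC n m σ s) =
      ∑ i, ((Fin.snoc (fun _ => m) 1 : Fin (n + 1) → ℕ) i : ℂ) *
        (Fin.snoc (fun i => x i.castSucc) (σ * x (Fin.last n)) : Fin (n + 1) → ℂ) i ^ s := by
  simp only [deformedNewtonSumC, aeval_eq_eval, map_add, map_sum, map_pow, eval_X, map_mul,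
    eval_C, Fin.sum_univ_castSucc, Fin.snoc_castSucc, Fin.snoc_last, Nat.cast_one, mul_pow,
    one_mul]
  field_simp
  rw [Finset.mul_sum]

theorem zeroLocus_span_deformedNewtonSumC {n m : ℕ} (hm : m ≠ 0) {σ : ℂ} (hσ : σ ≠ 0) :
    zeroLocus ℂ (Ideal.span {q | ∃ s ∈ Finset.Icc 1 (n + 1), q = deformedNewtonSumC n m σ s}) =
      {0} := by
  rw [zeroLocus_span]
  ext x
  simp only [Set.mem_ofPred_eq, Set.mem_singleton_iff, forall_exists_index, and_imp]
  constructor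
  · intro hx
    have hweights : ∀ i, (Fin.snoc (fun _ => m) 1 : Fin (n + 1) → ℕ) i ≠ 0 := by
      intro i
      induction i using Fin.lastCases <;> simp [hm]
    have hv := eq_zero_of_forall_sum_mul_pow_eq_zero _ hweights _ fun s hs => by
      rw [← mul_aeval_deformedNewtonSumC hm, hx _ s (by simpa using hs) rfl, mul_zero]
    funext i
    induction i using Fin.lastCases with
    | last => simpa [hσ] using congrFun hv (Fin.last n)
    | cast i => simpa using congrFun hv i.castSucc
  · rintro rfl _ s hs rfl
    simp [aeval_zero, deformedNewtonSumC,
      Nat.one_le_iff_ne_zero.mp (Finset.mem_Icc.mp hs).1]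

/-- For `A_n(m)` with a positive integer `m`, the quotient `ℂ[x₁,...,x_{n+1}]/(p₁,...,p_{n+1})`
by the deformed Newton sums is finite-dimensional; equivalently, the radical of the ideal
`(p₁,...,p_{n+1})` is the maximal ideal `(x₁,...,x_{n+1})`. -/
theorem deformed_invariants_quotient_finiteDimensional (n m : ℕ) (hm : 1 ≤ m) (σ : ℂ)
    (hσ : σ ^ 2 = (m : ℂ)) :
    FiniteDimensional ℂ
      (MvPolynomial (Fin (n + 1)) ℂ ⧸
        Ideal.span {q | ∃ s ∈ Finset.Icc 1 (n + 1), q = deformedNewtonSumC n m σ s}) ∧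
    (Ideal.span {q | ∃ s ∈ Finset.Icc 1 (n + 1), q = deformedNewtonSumC n m σ s}).radical =
      Ideal.span (Set.range (X : Fin (n + 1) → MvPolynomial (Fin (n + 1)) ℂ)) := by
  have hm0 : m ≠ 0 := Nat.one_le_iff_ne_zero.mp hm
  have hσ0 : σ ≠ 0 := by
    rintro rfl
    exact hm0 (by exact_mod_cast hσ.symm.trans (zero_pow two_ne_zero))
  have hrad := radical_eq_span_range_X_of_zeroLocus_eq_singleton_zero
    (zeroLocus_span_deformedNewtonSumC (n := n) hm0 hσ0)
  exact ⟨finite_quotient_of_forall_X_mem_radical _ fun i =>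
    hrad ▸ Ideal.subset_span (Set.mem_range_self i), hrad⟩
end
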